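/- arXiv:math/0610879 — 8 statements merged into one kernel-verified Lean document; each statement's English description precedes it below -/
import Mathlib

section
/- Let (a_l)_{l≥1} be a sequence of positive integers with sup_l a_l = ∞, and let M(n,l) be defined by M(n,n)=1, M(2n+2,0)=M(2n+1,1), M(n,l)=M(n-1,l-1)+a_{l+1}·M(n-1,l+1) for 0<l<n. Then for every M > 0 there exists C > 0 such that M(2n,0) > C·M^n for all n. -/
section Aux

variable {a : ℕ → ℕ} {M : ℕ → ℕ → ℝ}

lemma aux_one_le (ha : ∀ l, 1 ≤ l → 0 < a l)
    (hMdiag : ∀ n, M n n = 1)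
    (hM0 : ∀ n, M (2 * n + 2) 0 = M (2 * n + 1) 1)
    (hMrec : ∀ n l, 0 < l → l < n →
      M n l = M (n - 1) (l - 1) + (a (l + 1) : ℝ) * M (n - 1) (l + 1)) :
    ∀ n l, l ≤ n → Even (n + l) → 1 ≤ M n l := by
  intro n
  induction n using Nat.strong_induction_on with
  | _ n ih =>
    intro l hln hpar
    obtain ⟨r, hr⟩ := hpar
    rcases eq_or_lt_of_le hln with h | h
    · rw [h, hMdiag]
    · rcases Nat.eq_zero_or_pos l with hl0 | hl
      · subst hl0
        obtain ⟨m, hm⟩ : ∃ m, n = 2 * m + 2 := ⟨r - 1, by omega⟩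
        rw [hm, hM0]
        exact ih (2 * m + 1) (by omega) 1 (by omega) ⟨m + 1, by ring⟩
      · have h2 : l + 2 ≤ n := by omega
        rw [hMrec n l hl h]
        have h1 : 1 ≤ M (n - 1) (l - 1) :=
          ih (n - 1) (by omega) (l - 1) (by omega) ⟨r - 1, by omega⟩
        have h3 : 1 ≤ M (n - 1) (l + 1) :=
          ih (n - 1) (by omega) (l + 1) (by omega) ⟨r, by omega⟩
        have h4 : (1 : ℝ) ≤ (a (l + 1) : ℝ) := by exact_mod_cast ha (l + 1) (by omega)
        nlinarith

lemma aux_ascend (ha : ∀ l, 1 ≤ l → 0 < a l)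
    (hMdiag : ∀ n, M n n = 1)
    (hM0 : ∀ n, M (2 * n + 2) 0 = M (2 * n + 1) 1)
    (hMrec : ∀ n l, 0 < l → l < n →
      M n l = M (n - 1) (l - 1) + (a (l + 1) : ℝ) * M (n - 1) (l + 1)) :
    ∀ j q, j + 1 ≤ q → Even (q + j + 1) → M q (j + 1) ≤ M (q + j) 1 := by
  intro j
  induction j with
  | zero => intro q _ _; simp
  | succ j ih =>
    intro q hq hpar
    obtain ⟨r, hr⟩ := hpar
    have h1 : M (q + 1) (j + 1) ≤ M (q + 1 + j) 1 := ih (q + 1) (by omega) ⟨r, by omega⟩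
    have h2 : M q (j + 2) ≤ M (q + 1) (j + 1) := by
      rw [hMrec (q + 1) (j + 1) (by omega) (by omega)]
      simp only [Nat.add_sub_cancel]
      have hj : 1 ≤ M q j := aux_one_le ha hMdiag hM0 hMrec q j (by omega) ⟨r - 1, by omega⟩
      have hj2 : 1 ≤ M q (j + 2) :=
        aux_one_le ha hMdiag hM0 hMrec q (j + 2) (by omega) ⟨r, by omega⟩
      have h4 : (1 : ℝ) ≤ (a (j + 2) : ℝ) := by exact_mod_cast ha (j + 2) (by omega)
      nlinarith
    have e : q + (j + 1) = q + 1 + j := by omega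
    rw [e]
    exact le_trans h2 h1

lemma aux_bounce (ha : ∀ l, 1 ≤ l → 0 < a l)
    (hMdiag : ∀ n, M n n = 1)
    (hM0 : ∀ n, M (2 * n + 2) 0 = M (2 * n + 1) 1)
    (hMrec : ∀ n l, 0 < l → l < n →
      M n l = M (n - 1) (l - 1) + (a (l + 1) : ℝ) * M (n - 1) (l + 1)) :
    ∀ k m, 1 ≤ k → k + 2 ≤ m → Even (m + k) →
      (a (k + 1) : ℝ) * M (m - 2) k ≤ M m k := by
  intro k m hk hm hpar
  obtain ⟨r, hr⟩ := hpar
  have hstep : M (m - 2) k ≤ M (m - 1) (k + 1) := by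
    rcases eq_or_lt_of_le hm with h | h
    · subst h
      show M k k ≤ M (k + 1) (k + 1)
      rw [hMdiag, hMdiag]
    · have h4 : k + 4 ≤ m := by omega
      rw [hMrec (m - 1) (k + 1) (by omega) (by omega)]
      have e1 : m - 1 - 1 = m - 2 := by omega
      have e2 : k + 1 - 1 = k := by omega
      rw [e1, e2]
      have hnn : 1 ≤ M (m - 2) (k + 2) :=
        aux_one_le ha hMdiag hM0 hMrec (m - 2) (k + 2) (by omega) ⟨r, by omega⟩
      have h4' : (1 : ℝ) ≤ (a (k + 2) : ℝ) := by exact_mod_cast ha (k + 2) (by omega)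
      nlinarith
  have hrec := hMrec m k (by omega) (by omega)
  have h1 : 1 ≤ M (m - 1) (k - 1) :=
    aux_one_le ha hMdiag hM0 hMrec (m - 1) (k - 1) (by omega) ⟨r - 1, by omega⟩
  have hA : (1 : ℝ) ≤ (a (k + 1) : ℝ) := by exact_mod_cast ha (k + 1) (by omega)
  have := mul_le_mul_of_nonneg_left hstep (le_trans zero_le_one hA)
  nlinarith

lemma aux_iter (ha : ∀ l, 1 ≤ l → 0 < a l)
    (hMdiag : ∀ n, M n n = 1)
    (hM0 : ∀ n, M (2 * n + 2) 0 = M (2 * n + 1) 1)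
    (hMrec : ∀ n l, 0 < l → l < n →
      M n l = M (n - 1) (l - 1) + (a (l + 1) : ℝ) * M (n - 1) (l + 1)) :
    ∀ j k, 1 ≤ k → (a (k + 1) : ℝ) ^ j ≤ M (k + 2 * j) k := by
  intro j
  induction j with
  | zero => intro k hk; simpa using (hMdiag k).ge
  | succ j ih =>
    intro k hk
    have h1 := aux_bounce ha hMdiag hM0 hMrec k (k + 2 * j + 2) hk (by omega)
      ⟨k + j + 1, by ring⟩
    have e : k + 2 * j + 2 - 2 = k + 2 * j := by omega
    rw [e] at h1
    have h2 := ih k hk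
    have hA : (0 : ℝ) ≤ (a (k + 1) : ℝ) := by positivity
    have e2 : k + 2 * (j + 1) = k + 2 * j + 2 := by omega
    rw [e2]
    calc (a (k + 1) : ℝ) ^ (j + 1) = (a (k + 1) : ℝ) * (a (k + 1) : ℝ) ^ j := by ring
      _ ≤ (a (k + 1) : ℝ) * M (k + 2 * j) k := mul_le_mul_of_nonneg_left h2 hA
      _ ≤ M (k + 2 * j + 2) k := h1

lemma aux_main (ha : ∀ l, 1 ≤ l → 0 < a l)
    (hMdiag : ∀ n, M n n = 1)
    (hM0 : ∀ n, M (2 * n + 2) 0 = M (2 * n + 1) 1)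
    (hMrec : ∀ n l, 0 < l → l < n →
      M n l = M (n - 1) (l - 1) + (a (l + 1) : ℝ) * M (n - 1) (l + 1)) :
    ∀ k, 1 ≤ k → ∀ n, k ≤ n → (a (k + 1) : ℝ) ^ (n - k) ≤ M (2 * n) 0 := by
  intro k hk n hn
  have hn1 : 1 ≤ n := le_trans hk hn
  have h0 : M (2 * n) 0 = M (2 * n - 1) 1 := by
    have h := hM0 (n - 1)
    have e0 : 2 * (n - 1) + 2 = 2 * n := by omega
    have e1 : 2 * (n - 1) + 1 = 2 * n - 1 := by omega
    rw [e0, e1] at h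
    exact h
  have hasc := aux_ascend ha hMdiag hM0 hMrec (k - 1) (2 * n - k) (by omega) ⟨n, by omega⟩
  have e1 : k - 1 + 1 = k := by omega
  have e2 : 2 * n - k + (k - 1) = 2 * n - 1 := by omega
  rw [e1, e2] at hasc
  have hiter := aux_iter ha hMdiag hM0 hMrec (n - k) k hk
  have e3 : k + 2 * (n - k) = 2 * n - k := by omega
  rw [e3] at hiter
  rw [h0]
  exact le_trans hiter hasc

end Aux

/-- If the positive integers `a l` (for `l ≥ 1`) are unbounded, then the quantities
`M(2n,0)` defined by the recursion `M(n,n)=1`, `M(2n+2,0)=M(2n+1,1)`,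
`M(n,l)=M(n-1,l-1)+a_{l+1}·M(n-1,l+1)` grow faster than any geometric sequence. -/
theorem M_supergeom_of_unbounded (a : ℕ → ℕ) (ha : ∀ l, 1 ≤ l → 0 < a l)
    (hunb : ∀ N : ℕ, ∃ l, 1 ≤ l ∧ N < a l)
    (M : ℕ → ℕ → ℝ)
    (hMdiag : ∀ n, M n n = 1)
    (hM0 : ∀ n, M (2 * n + 2) 0 = M (2 * n + 1) 1)
    (hMrec : ∀ n l, 0 < l → l < n →
      M n l = M (n - 1) (l - 1) + (a (l + 1) : ℝ) * M (n - 1) (l + 1)) :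
    ∀ Mc : ℝ, 0 < Mc → ∃ C : ℝ, 0 < C ∧ ∀ n, C * Mc ^ n < M (2 * n) 0 := by
  intro Mc hMc
  set Q : ℝ := max Mc 1 with hQdef
  have hQ1 : (1 : ℝ) ≤ Q := le_max_right _ _
  have hQpos : (0 : ℝ) < Q := lt_of_lt_of_le one_pos hQ1
  obtain ⟨l, hl1, hla⟩ := hunb (a 1 + ⌈Q ^ 2⌉₊)
  have hl2 : 2 ≤ l := by
    by_contra h
    have : l = 1 := by omega
    subst this
    omega
  set k : ℕ := l - 1 with hkdef
  have hk1 : 1 ≤ k := by omega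
  have hkl : k + 1 = l := by omega
  have hA : Q ^ 2 < (a (k + 1) : ℝ) := by
    rw [hkl]
    calc Q ^ 2 ≤ (⌈Q ^ 2⌉₊ : ℝ) := Nat.le_ceil _
      _ ≤ ((a 1 + ⌈Q ^ 2⌉₊ : ℕ) : ℝ) := by exact_mod_cast Nat.le_add_left _ _
      _ < (a l : ℝ) := by exact_mod_cast hla
  refine ⟨1 / (2 * Q ^ (2 * k)), by positivity, fun n => ?_⟩
  have hM1 : 1 ≤ M (2 * n) 0 :=
    aux_one_le ha hMdiag hM0 hMrec (2 * n) 0 (by omega) ⟨n, by ring⟩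
  have hMcn : Mc ^ n ≤ Q ^ n := pow_le_pow_left₀ hMc.le (le_max_left _ _) n
  have hQn : (0:ℝ) < Q ^ (2 * k) := by positivity
  rcases le_or_gt n k with h | h
  · have h1 : Q ^ n ≤ Q ^ (2 * k) := pow_le_pow_right₀ hQ1 (by omega)
    have : 1 / (2 * Q ^ (2 * k)) * Mc ^ n ≤ 1 / 2 := by
      rw [div_mul_eq_mul_div, one_mul, div_le_div_iff₀ (by positivity) (by norm_num)]
      nlinarith
    linarith
  · have hmain := aux_main ha hMdiag hM0 hMrec k hk1 n h.le
    have h2 : (Q ^ 2) ^ (n - k) ≤ (a (k + 1) : ℝ) ^ (n - k) :=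
      pow_le_pow_left₀ (by positivity) hA.le _
    have h3 : Q ^ (2 * (n - k)) ≤ M (2 * n) 0 := by
      rw [pow_mul]
      exact le_trans h2 hmain
    have key : 1 / (2 * Q ^ (2 * k)) * Q ^ n < Q ^ (2 * (n - k)) := by
      rw [div_mul_eq_mul_div, one_mul, div_lt_iff₀ (by positivity)]
      have e : Q ^ (2 * (n - k)) * (2 * Q ^ (2 * k)) = 2 * Q ^ (2 * n) := by
        rw [mul_comm (2:ℝ) (Q ^ (2*k)), ← mul_assoc, ← pow_add]
        have : 2 * (n - k) + 2 * k = 2 * n := by omega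
        rw [this]
        ring
      rw [e]
      have h4 : Q ^ n ≤ Q ^ (2 * n) := pow_le_pow_right₀ hQ1 (by omega)
      have h5 : (0:ℝ) < Q ^ (2 * n) := by positivity
      linarith
    have hle : 1 / (2 * Q ^ (2 * k)) * Mc ^ n ≤ 1 / (2 * Q ^ (2 * k)) * Q ^ n := by
      apply mul_le_mul_of_nonneg_left hMcn
      positivity
    linarith
end

section
/- Let M(n,l) be defined by the recursion M(n,n)=1, M(2n+2,0)=M(2n+1,1), M(n,l)=M(n-1,l-1)+a_{l+1}·M(n-1,l+1) for 0<l<n, where (a_l) are positive integers. Then for n ≥ 2: M(2n-2,0)/M(2n,0) = M(2n-3,1)/M(2n-1,1) > M(2n-2,2)/M(2n,2). -/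
/-- For the quantities `M(n,l)` defined by the recursion `M(n,n)=1`,
`M(2n+2,0)=M(2n+1,1)`, `M(n,l)=M(n-1,l-1)+a_{l+1}·M(n-1,l+1)` (with positive integers
`a l` and all values positive), for `n ≥ 2` one has
`M(2n-2,0)/M(2n,0) = M(2n-3,1)/M(2n-1,1) > M(2n-2,2)/M(2n,2)`. -/
theorem M_ratio_eq_and_gt (a : ℕ → ℕ) (ha : ∀ l, 1 ≤ l → 0 < a l)
    (M : ℕ → ℕ → ℝ)
    (hMdiag : ∀ n, M n n = 1)
    (hM0 : ∀ n, M (2 * n + 2) 0 = M (2 * n + 1) 1)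
    (hMrec : ∀ n l, 0 < l → l < n →
      M n l = M (n - 1) (l - 1) + (a (l + 1) : ℝ) * M (n - 1) (l + 1))
    (hMpos : ∀ n l, l ≤ n → (n - l) % 2 = 0 → 0 < M n l) :
    ∀ n, 2 ≤ n →
      M (2 * n - 2) 0 / M (2 * n) 0 = M (2 * n - 3) 1 / M (2 * n - 1) 1 ∧
      M (2 * n - 2) 2 / M (2 * n) 2 < M (2 * n - 2) 0 / M (2 * n) 0 := by
  have ha' : ∀ l, 1 ≤ l → (0:ℝ) < (a l : ℝ) := fun l hl => by exact_mod_cast ha l hl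
  -- Key determinant positivity
  have key : ∀ m l, l + 2 ≤ m → (m - l) % 2 = 0 →
      M (m+2) l * M m (l+2) < M m l * M (m+2) (l+2) := by
    intro m
    induction m using Nat.strong_induction_on with
    | _ m ih =>
      intro l hl hpar
      rcases Nat.eq_zero_or_pos l with rfl | hlpos
      · -- l = 0, m even, m ≥ 2
        obtain ⟨k, rfl⟩ : ∃ k, m = 2*k + 2 := ⟨(m-2)/2, by omega⟩
        rw [show (0:ℕ)+2 = 2 by norm_num, show 2*k+2+2 = 2*k+4 by omega]
        rcases Nat.eq_zero_or_pos k with rfl | hk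
        · -- base case m = 2
          rw [show 2*0+4 = 4 by norm_num, show 2*0+2 = 2 by norm_num]
          have e1 : M 2 0 = M 1 1 := by have := hM0 0; norm_num at this; exact this
          have e2 : M 4 0 = M 3 1 := by have := hM0 1; norm_num at this; exact this
          have e3 : M 4 2 = M 3 1 + (a 3 : ℝ) * M 3 3 := by
            have := hMrec 4 2 (by norm_num) (by norm_num)
            norm_num at this; exact this
          have h31 : 0 < M 3 1 := hMpos 3 1 (by norm_num) (by norm_num)
          have ha3 := ha' 3 (by norm_num)
          rw [e1, e2, e3, hMdiag 1, hMdiag 2, hMdiag 3]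
          nlinarith [ha3, h31]
        · -- m = 2k+2 ≥ 4
          have e0 : M (2*k+2) 0 = M (2*k+1) 1 := hM0 k
          have e0' : M (2*k+4) 0 = M (2*k+3) 1 := by
            have := hM0 (k+1)
            rw [show 2*(k+1)+2 = 2*k+4 by ring, show 2*(k+1)+1 = 2*k+3 by ring] at this
            exact this
          have e2 : M (2*k+2) 2 = M (2*k+1) 1 + (a 3 : ℝ) * M (2*k+1) 3 := by
            have h := hMrec (2*k+2) 2 (by norm_num) (by omega)
            rw [show 2*k+2-1 = 2*k+1 by omega] at h
            norm_num at h; exact h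
          have e2' : M (2*k+4) 2 = M (2*k+3) 1 + (a 3 : ℝ) * M (2*k+3) 3 := by
            have h := hMrec (2*k+4) 2 (by norm_num) (by omega)
            rw [show 2*k+4-1 = 2*k+3 by omega] at h
            norm_num at h; exact h
          have ihh := ih (2*k+1) (by omega) 1 (by omega) (by omega)
          rw [show 2*k+1+2 = 2*k+3 by omega, show (1:ℕ)+2 = 3 by norm_num] at ihh
          have ha3 := ha' 3 (by norm_num)
          rw [e0, e0', e2, e2']
          nlinarith [mul_lt_mul_of_pos_left ihh ha3]
      · -- l ≥ 1
        by_cases hb : l + 2 = m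
        · -- boundary case
          subst hb
          have r1 : M (l+2) l = M (l+1) (l-1) + (a (l+1) : ℝ) * M (l+1) (l+1) := by
            have h := hMrec (l+2) l hlpos (by omega)
            rw [show l+2-1 = l+1 by omega] at h; exact h
          have r3 : M (l+2+2) l = M (l+3) (l-1) + (a (l+1) : ℝ) * M (l+3) (l+1) := by
            have h := hMrec (l+2+2) l hlpos (by omega)
            rw [show l+2+2-1 = l+3 by omega] at h; exact h
          have r4 : M (l+2+2) (l+2) = M (l+3) (l+1) + (a (l+3) : ℝ) * M (l+3) (l+3) := by
            have h := hMrec (l+2+2) (l+2) (by omega) (by omega)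
            rw [show l+2+2-1 = l+3 by omega, show l+2-1 = l+1 by omega,
              show l+2+1 = l+3 by omega] at h
            exact h
          have ih1 := ih (l+1) (by omega) (l-1) (by omega) (by omega)
          rw [show l+1+2 = l+3 by omega, show l-1+2 = l+1 by omega, hMdiag (l+1),
            mul_one] at ih1
          have hA : 0 < M (l+1) (l-1) := hMpos _ _ (by omega) (by omega)
          have hB' : 0 < M (l+3) (l+1) := hMpos _ _ (by omega) (by omega)
          have hp := ha' (l+1) (by omega)
          have hq := ha' (l+3) (by omega)
          rw [r1, r3, r4, hMdiag (l+2), hMdiag (l+1), hMdiag (l+3)]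
          nlinarith [ih1, mul_pos hq hA, mul_pos hp hq, hB', hp, hq, hA]
        · -- interior case
          have hl4 : l + 4 ≤ m := by omega
          have r1 : M m l = M (m-1) (l-1) + (a (l+1) : ℝ) * M (m-1) (l+1) :=
            hMrec m l hlpos (by omega)
          have r2 : M m (l+2) = M (m-1) (l+1) + (a (l+3) : ℝ) * M (m-1) (l+3) := by
            have h := hMrec m (l+2) (by omega) (by omega)
            rw [show l+2-1 = l+1 by omega, show l+2+1 = l+3 by omega] at h; exact h
          have r3 : M (m+2) l = M (m+1) (l-1) + (a (l+1) : ℝ) * M (m+1) (l+1) := by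
            have h := hMrec (m+2) l hlpos (by omega)
            rw [show m+2-1 = m+1 by omega] at h; exact h
          have r4 : M (m+2) (l+2) = M (m+1) (l+1) + (a (l+3) : ℝ) * M (m+1) (l+3) := by
            have h := hMrec (m+2) (l+2) (by omega) (by omega)
            rw [show m+2-1 = m+1 by omega, show l+2-1 = l+1 by omega,
              show l+2+1 = l+3 by omega] at h
            exact h
          have ih1 := ih (m-1) (by omega) (l-1) (by omega) (by omega)
          rw [show m-1+2 = m+1 by omega, show l-1+2 = l+1 by omega] at ih1
          have ih2 := ih (m-1) (by omega) (l+1) (by omega) (by omega)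
          rw [show m-1+2 = m+1 by omega, show l+1+2 = l+3 by omega] at ih2
          -- positivity facts
          have hA : 0 < M (m-1) (l-1) := hMpos _ _ (by omega) (by omega)
          have hB : 0 < M (m-1) (l+1) := hMpos _ _ (by omega) (by omega)
          have hC : 0 < M (m-1) (l+3) := hMpos _ _ (by omega) (by omega)
          have hA' : 0 < M (m+1) (l-1) := hMpos _ _ (by omega) (by omega)
          have hB' : 0 < M (m+1) (l+1) := hMpos _ _ (by omega) (by omega)
          have hC' : 0 < M (m+1) (l+3) := hMpos _ _ (by omega) (by omega)
          have hp := ha' (l+1) (by omega)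
          have hq := ha' (l+3) (by omega)
          -- gap-4 minor from the two gap-2 minors
          have h3 : (M (m+1) (l-1) * M (m-1) (l+1)) * (M (m+1) (l+1) * M (m-1) (l+3))
              < (M (m-1) (l-1) * M (m+1) (l+1)) * (M (m-1) (l+1) * M (m+1) (l+3)) :=
            mul_lt_mul'' ih1 ih2 (by positivity) (by positivity)
          have hbb : (0:ℝ) < M (m-1) (l+1) * M (m+1) (l+1) := mul_pos hB hB'
          have hF : M (m+1) (l-1) * M (m-1) (l+3) < M (m-1) (l-1) * M (m+1) (l+3) := by
            rw [← mul_lt_mul_iff_of_pos_right hbb]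
            nlinarith [h3]
          rw [r1, r2, r3, r4]
          nlinarith [ih1, mul_lt_mul_of_pos_left hF hq,
            mul_lt_mul_of_pos_left ih2 (mul_pos hp hq)]
  intro n hn
  obtain ⟨k, rfl⟩ : ∃ k, n = k + 2 := ⟨n - 2, by omega⟩
  rw [show 2*(k+2)-2 = 2*k+2 by omega, show 2*(k+2)-3 = 2*k+1 by omega,
    show 2*(k+2)-1 = 2*k+3 by omega, show 2*(k+2) = 2*k+4 by ring]
  have h1 : M (2*k+2) 0 = M (2*k+1) 1 := hM0 k
  have h2 : M (2*k+4) 0 = M (2*k+3) 1 := by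
    have := hM0 (k+1)
    rw [show 2*(k+1)+2 = 2*k+4 by ring, show 2*(k+1)+1 = 2*k+3 by ring] at this
    exact this
  constructor
  · rw [h1, h2]
  · have hkey := key (2*k+2) 0 (by omega) (by omega)
    rw [show (0:ℕ)+2 = 2 by norm_num, show 2*k+2+2 = 2*k+4 by omega] at hkey
    have d1 : 0 < M (2*k+4) 0 := hMpos _ _ (by omega) (by omega)
    have d2 : 0 < M (2*k+4) 2 := hMpos _ _ (by omega) (by omega)
    rw [div_lt_div_iff₀ d2 d1]
    nlinarith [hkey]
end

section
/- Let M(n,l) satisfy the recursion M(n,n)=1, M(2n+2,0)=M(2n+1,1), M(n,l)=M(n-1,l-1)+a_{l+1}·M(n-1,l+1) with positive integers a_l. Then for n ≥ 2 and each even l with 0 ≤ l ≤ 2n-4: M(2n-2,l)/M(2n,l) > M(2n-1,l+1)/M(2n+1,l+1) > M(2n-2,l+2)/M(2n,l+2). -/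
/-- Extension of `M` by zero above the diagonal. -/
def Nf (M : ℕ → ℕ → ℝ) : ℕ → ℕ → ℝ := fun n l => if l ≤ n then M n l else 0

lemma Nf_eq (M : ℕ → ℕ → ℝ) {n l : ℕ} (h : l ≤ n) : Nf M n l = M n l := if_pos h

lemma Nf_zero (M : ℕ → ℕ → ℝ) {n l : ℕ} (h : n < l) : Nf M n l = 0 :=
  if_neg (by omega)

lemma Nf_diag (M : ℕ → ℕ → ℝ) (hMdiag : ∀ n, M n n = 1) (n : ℕ) : Nf M n n = 1 := by
  rw [Nf_eq M le_rfl]; exact hMdiag n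

lemma Nf_pos (M : ℕ → ℕ → ℝ) (hMpos : ∀ n l, l ≤ n → (n - l) % 2 = 0 → 0 < M n l)
    {n l : ℕ} (h : l ≤ n) (hp : (n - l) % 2 = 0) : 0 < Nf M n l := by
  rw [Nf_eq M h]; exact hMpos n l h hp

lemma Nf_nonneg (M : ℕ → ℕ → ℝ) (hMpos : ∀ n l, l ≤ n → (n - l) % 2 = 0 → 0 < M n l)
    {n l : ℕ} (hp : (n - l) % 2 = 0) : 0 ≤ Nf M n l := by
  by_cases h : l ≤ n
  · exact (Nf_pos M hMpos h hp).le
  · rw [Nf_zero M (by omega)]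

lemma Nf_rec2 (a : ℕ → ℕ) (M : ℕ → ℕ → ℝ)
    (hMdiag : ∀ n, M n n = 1)
    (hMrec : ∀ n l, 0 < l → l < n →
      M n l = M (n - 1) (l - 1) + (a (l + 1) : ℝ) * M (n - 1) (l + 1))
    {n n' j j' j'' : ℕ} (hn : n' = n + 1) (hj : j' = j + 1) (hj2 : j'' = j + 2)
    (hcond : j' = n' ∨ j'' < n') :
    Nf M n' j' = Nf M n j + (a j'' : ℝ) * Nf M n j'' := by
  subst hn hj hj2
  rcases hcond with h | h
  · have hjn : j = n := by omega
    subst hjn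
    rw [Nf_diag M hMdiag, Nf_diag M hMdiag, Nf_zero M (by omega)]
    ring
  · rw [Nf_eq M (by omega), Nf_eq M (by omega), Nf_eq M (by omega)]
    have h2 := hMrec (n + 1) (j + 1) (by omega) (by omega)
    exact h2

lemma Nf_col0 (M : ℕ → ℕ → ℝ) (hM0 : ∀ n, M (2 * n + 2) 0 = M (2 * n + 1) 1)
    (q : ℕ) {p r : ℕ} (hp : p = 2 * q + 2) (hr : r = 2 * q + 1) :
    Nf M p 0 = Nf M r 1 := by
  subst hp hr
  rw [Nf_eq M (by omega), Nf_eq M (by omega)]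
  exact hM0 q

lemma keyQ (a : ℕ → ℕ) (M : ℕ → ℕ → ℝ) (ha : ∀ l, 1 ≤ l → 0 < a l)
    (hMdiag : ∀ n, M n n = 1)
    (hM0 : ∀ n, M (2 * n + 2) 0 = M (2 * n + 1) 1)
    (hMrec : ∀ n l, 0 < l → l < n →
      M n l = M (n - 1) (l - 1) + (a (l + 1) : ℝ) * M (n - 1) (l + 1))
    (hMpos : ∀ n l, l ≤ n → (n - l) % 2 = 0 → 0 < M n l) :
    ∀ m l, l ≤ m → (m - l) % 2 = 0 →
      Nf M m (l + 2) * Nf M (m + 2) l < Nf M m l * Nf M (m + 2) (l + 2) := by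
  intro m
  induction m using Nat.strong_induction_on with
  | _ m ih =>
    intro l hlm hpar
    rcases eq_or_lt_of_le hlm with heq | hlt
    · subst heq
      rw [Nf_zero M (by omega), Nf_diag M hMdiag, Nf_diag M hMdiag]
      norm_num
    · have hl2m : l + 2 ≤ m := by omega
      rcases Nat.eq_zero_or_pos l with rfl | hlpos
      · simp only [zero_add]
        obtain ⟨k, rfl⟩ : ∃ k, m = 2 * k + 2 := ⟨(m - 2) / 2, by omega⟩
        rw [show 2 * k + 2 + 2 = 2 * k + 4 from by omega]
        have e1 : Nf M (2 * k + 2) 0 = Nf M (2 * k + 1) 1 := Nf_col0 M hM0 k rfl rfl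
        have e2 : Nf M (2 * k + 4) 0 = Nf M (2 * k + 3) 1 :=
          Nf_col0 M hM0 (k + 1) (by omega) (by omega)
        have r1 : Nf M (2 * k + 2) 2 = Nf M (2 * k + 1) 1 + (a 3 : ℝ) * Nf M (2 * k + 1) 3 :=
          Nf_rec2 a M hMdiag hMrec (by omega) (by omega) (by omega) (by omega)
        have r2 : Nf M (2 * k + 4) 2 = Nf M (2 * k + 3) 1 + (a 3 : ℝ) * Nf M (2 * k + 3) 3 :=
          Nf_rec2 a M hMdiag hMrec (by omega) (by omega) (by omega) (by omega)
        have q := ih (2 * k + 1) (by omega) 1 (by omega) (by omega)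
        rw [show 2 * k + 1 + 2 = 2 * k + 3 from by omega] at q
        have ha3 : (0 : ℝ) < (a 3 : ℝ) := by exact_mod_cast ha 3 (by omega)
        rw [e1, e2, r1, r2]
        nlinarith [mul_lt_mul_of_pos_left q ha3]
      · obtain ⟨j, rfl⟩ : ∃ j, l = j + 1 := ⟨l - 1, by omega⟩
        obtain ⟨p, rfl⟩ : ∃ p, m = p + 1 := ⟨m - 1, by omega⟩
        have hjp : j + 2 ≤ p := by omega
        rw [show p + 1 + 2 = p + 3 from by omega, show j + 1 + 2 = j + 3 from by omega]
        have R1 : Nf M (p + 3) (j + 1) = Nf M (p + 2) j + (a (j + 2) : ℝ) * Nf M (p + 2) (j + 2) :=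
          Nf_rec2 a M hMdiag hMrec (by omega) rfl rfl (by omega)
        have R2 : Nf M (p + 3) (j + 3)
            = Nf M (p + 2) (j + 2) + (a (j + 4) : ℝ) * Nf M (p + 2) (j + 4) :=
          Nf_rec2 a M hMdiag hMrec (by omega) (by omega) (by omega) (by omega)
        have R3 : Nf M (p + 1) (j + 1) = Nf M p j + (a (j + 2) : ℝ) * Nf M p (j + 2) :=
          Nf_rec2 a M hMdiag hMrec rfl rfl rfl (by omega)
        have R4 : Nf M (p + 1) (j + 3) = Nf M p (j + 2) + (a (j + 4) : ℝ) * Nf M p (j + 4) :=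
          Nf_rec2 a M hMdiag hMrec rfl (by omega) (by omega) (by omega)
        have q1 := ih p (by omega) j (by omega) (by omega)
        have q2 := ih p (by omega) (j + 2) (by omega) (by omega)
        rw [show j + 2 + 2 = j + 4 from by omega] at q2
        have hA : 0 < Nf M p j := Nf_pos M hMpos (by omega) (by omega)
        have hB : 0 < Nf M p (j + 2) := Nf_pos M hMpos (by omega) (by omega)
        have hC : 0 ≤ Nf M p (j + 4) := Nf_nonneg M hMpos (by omega)
        have hD : 0 < Nf M (p + 2) j := Nf_pos M hMpos (by omega) (by omega)
        have hE : 0 < Nf M (p + 2) (j + 2) := Nf_pos M hMpos (by omega) (by omega)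
        have hF : 0 < Nf M (p + 2) (j + 4) := Nf_pos M hMpos (by omega) (by omega)
        have hc : (0 : ℝ) < (a (j + 2) : ℝ) := by exact_mod_cast ha (j + 2) (by omega)
        have hd : (0 : ℝ) < (a (j + 4) : ℝ) := by exact_mod_cast ha (j + 4) (by omega)
        have h1 := mul_lt_mul_of_pos_right q2 hD
        have h2 := mul_lt_mul_of_pos_right q1 hF
        have h3 : Nf M p (j + 4) * Nf M (p + 2) j * Nf M (p + 2) (j + 2)
            < Nf M p j * Nf M (p + 2) (j + 4) * Nf M (p + 2) (j + 2) := by nlinarith [h1, h2]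
        have q3 := lt_of_mul_lt_mul_right h3 hE.le
        rw [R1, R2, R3, R4]
        nlinarith [mul_lt_mul_of_pos_left q3 hd,
          mul_lt_mul_of_pos_left q2 (mul_pos hc hd), q1]

/-- For the quantities `M(n,l)` defined by the recursion `M(n,n)=1`,
`M(2n+2,0)=M(2n+1,1)`, `M(n,l)=M(n-1,l-1)+a_{l+1}·M(n-1,l+1)` (with positive integers
`a l` and all values positive), for `n ≥ 2` and each even `l` with `0 ≤ l ≤ 2n-4`:
`M(2n-2,l)/M(2n,l) > M(2n-1,l+1)/M(2n+1,l+1) > M(2n-2,l+2)/M(2n,l+2)`. -/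
theorem M_interlacing_ratios (a : ℕ → ℕ) (ha : ∀ l, 1 ≤ l → 0 < a l)
    (M : ℕ → ℕ → ℝ)
    (hMdiag : ∀ n, M n n = 1)
    (hM0 : ∀ n, M (2 * n + 2) 0 = M (2 * n + 1) 1)
    (hMrec : ∀ n l, 0 < l → l < n →
      M n l = M (n - 1) (l - 1) + (a (l + 1) : ℝ) * M (n - 1) (l + 1))
    (hMpos : ∀ n l, l ≤ n → (n - l) % 2 = 0 → 0 < M n l) :
    ∀ n l, 2 ≤ n → l % 2 = 0 → l ≤ 2 * n - 4 →
      M (2 * n - 1) (l + 1) / M (2 * n + 1) (l + 1) < M (2 * n - 2) l / M (2 * n) l ∧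
      M (2 * n - 2) (l + 2) / M (2 * n) (l + 2) <
        M (2 * n - 1) (l + 1) / M (2 * n + 1) (l + 1) := by
  intro n l hn hl2 hll
  obtain ⟨k, rfl⟩ : ∃ k, n = k + 2 := ⟨n - 2, by omega⟩
  have hl : l ≤ 2 * k := by omega
  rw [show 2 * (k + 2) - 1 = 2 * k + 3 from by omega,
      show 2 * (k + 2) + 1 = 2 * k + 5 from by omega,
      show 2 * (k + 2) - 2 = 2 * k + 2 from by omega,
      show 2 * (k + 2) = 2 * k + 4 from by omega]
  have q := keyQ a M ha hMdiag hM0 hMrec hMpos (2 * k + 2) l (by omega) (by omega)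
  rw [show 2 * k + 2 + 2 = 2 * k + 4 from by omega] at q
  have RA : Nf M (2 * k + 3) (l + 1)
      = Nf M (2 * k + 2) l + (a (l + 2) : ℝ) * Nf M (2 * k + 2) (l + 2) :=
    Nf_rec2 a M hMdiag hMrec (by omega) rfl rfl (by omega)
  have RB : Nf M (2 * k + 5) (l + 1)
      = Nf M (2 * k + 4) l + (a (l + 2) : ℝ) * Nf M (2 * k + 4) (l + 2) :=
    Nf_rec2 a M hMdiag hMrec (by omega) rfl rfl (by omega)
  have hA : 0 < Nf M (2 * k + 2) l := Nf_pos M hMpos (by omega) (by omega)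
  have hB : 0 < Nf M (2 * k + 2) (l + 2) := Nf_pos M hMpos (by omega) (by omega)
  have hD : 0 < Nf M (2 * k + 4) l := Nf_pos M hMpos (by omega) (by omega)
  have hE : 0 < Nf M (2 * k + 4) (l + 2) := Nf_pos M hMpos (by omega) (by omega)
  have hP : 0 < Nf M (2 * k + 3) (l + 1) := Nf_pos M hMpos (by omega) (by omega)
  have hQ : 0 < Nf M (2 * k + 5) (l + 1) := Nf_pos M hMpos (by omega) (by omega)
  have hc : (0 : ℝ) < (a (l + 2) : ℝ) := by exact_mod_cast ha (l + 2) (by omega)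
  rw [← Nf_eq M (show l + 1 ≤ 2 * k + 3 by omega), ← Nf_eq M (show l + 1 ≤ 2 * k + 5 by omega),
      ← Nf_eq M (show l ≤ 2 * k + 2 by omega), ← Nf_eq M (show l ≤ 2 * k + 4 by omega),
      ← Nf_eq M (show l + 2 ≤ 2 * k + 2 by omega), ← Nf_eq M (show l + 2 ≤ 2 * k + 4 by omega)]
  constructor
  · rw [div_lt_div_iff₀ hQ hD, RA, RB]
    nlinarith [mul_lt_mul_of_pos_left q hc]
  · rw [div_lt_div_iff₀ hE hQ, RA, RB]
    nlinarith [q]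
end

section
/- Let M(n,l) satisfy the recursion M(n,n)=1, M(2n+2,0)=M(2n+1,1), M(n,l)=M(n-1,l-1)+a_{l+1}·M(n-1,l+1) with positive integers a_l. Then the sequence n ↦ M(2n,0)/M(2n+2,0) is strictly decreasing for n ≥ 1. -/
open Finset

/-- symmetric edge weights: edge (l,l+1) has weight `sw a l`; `sw a 0 = 1`,
`sw a (l+1) = √(a (l+2))`. -/
noncomputable def sw (a : ℕ → ℕ) : ℕ → ℝ
  | 0 => 1
  | (l+1) => Real.sqrt (a (l+2))

/-- `vv a n = J^n e₀` for the symmetric Jacobi matrix. -/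
noncomputable def vv (a : ℕ → ℕ) : ℕ → ℕ → ℝ
  | 0, 0 => 1
  | 0, (_+1) => 0
  | (n+1), 0 => sw a 0 * vv a n 1
  | (n+1), (l+1) => sw a l * vv a n l + sw a (l+1) * vv a n (l+2)

lemma sw_pos (a : ℕ → ℕ) (ha : ∀ l, 1 ≤ l → 0 < a l) (l : ℕ) : 0 < sw a l := by
  cases l with
  | zero => norm_num [sw]
  | succ l =>
      have h := ha (l+2) (by omega)
      have : (0:ℝ) < (a (l+2) : ℝ) := by exact_mod_cast h
      simpa [sw] using Real.sqrt_pos.mpr this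

lemma sw_sq (a : ℕ → ℕ) (l : ℕ) : sw a (l+1) ^ 2 = (a (l+2) : ℝ) := by
  simp [sw, Real.sq_sqrt (by positivity : (0:ℝ) ≤ (a (l+2) : ℝ))]

lemma vv_zero (a : ℕ → ℕ) : ∀ n l, n < l → vv a n l = 0 := by
  intro n
  induction n with
  | zero => intro l hl; match l, hl with | (k+1), _ => rfl
  | succ n ih =>
      intro l hl
      match l, hl with
      | (k+1), hl =>
          have h1 : vv a n k = 0 := ih k (by omega)
          have h2 : vv a n (k+2) = 0 := ih (k+2) (by omega)
          simp [vv, h1, h2]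

noncomputable def pp (a : ℕ → ℕ) (l : ℕ) : ℝ := ∏ i ∈ range l, sw a i

lemma pp_pos (a : ℕ → ℕ) (ha : ∀ l, 1 ≤ l → 0 < a l) (l : ℕ) : 0 < pp a l :=
  Finset.prod_pos fun i _ => sw_pos a ha i

lemma vv_diag (a : ℕ → ℕ) : ∀ n, vv a n n = pp a n := by
  intro n
  induction n with
  | zero => simp [vv, pp]
  | succ n ih =>
      have h2 : vv a n (n+2) = 0 := vv_zero a n (n+2) (by omega)
      simp [vv, h2, ih, pp, Finset.prod_range_succ, mul_comm]

noncomputable def BB (a : ℕ → ℕ) (n m : ℕ) : ℝ := ∑ l ∈ range (n+1), vv a n l * vv a m l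

lemma sum_eq_BB (a : ℕ → ℕ) (n m N : ℕ) (h : n + 1 ≤ N) :
    ∑ l ∈ range N, vv a n l * vv a m l = BB a n m := by
  rw [BB]
  symm
  apply Finset.sum_subset (Finset.range_subset_range.2 h)
  intro x _ hx
  have : n < x := by simpa using hx
  simp [vv_zero a n x this]

lemma shift_sum (a : ℕ → ℕ) (N n m : ℕ) (hn : n ≤ N) (hm : m ≤ N) :
    ∑ l ∈ range (N+1), vv a (n+1) l * vv a m l
      = ∑ l ∈ range (N+1), vv a n l * vv a (m+1) l := by
  have hvn : vv a n (N+1) = 0 := vv_zero a n (N+1) (by omega)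
  have hvm : vv a m (N+1) = 0 := vv_zero a m (N+1) (by omega)
  have hL : ∑ l ∈ range (N+1), vv a (n+1) l * vv a m l
      = (∑ i ∈ range N, sw a i * vv a n i * vv a m (i+1))
        + ∑ l ∈ range (N+1), sw a l * vv a n (l+1) * vv a m l := by
    rw [Finset.sum_range_succ' (fun l => vv a (n+1) l * vv a m l) N,
        Finset.sum_range_succ' (fun l => sw a l * vv a n (l+1) * vv a m l) N]
    have : ∀ i, vv a (n+1) (i+1) * vv a m (i+1)
        = sw a i * vv a n i * vv a m (i+1) + sw a (i+1) * vv a n (i+2) * vv a m (i+1) := by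
      intro i; simp [vv]; ring
    simp only [this, Finset.sum_add_distrib]
    simp [vv]
    ring
  have hR : ∑ l ∈ range (N+1), vv a n l * vv a (m+1) l
      = (∑ i ∈ range N, sw a i * vv a n (i+1) * vv a m i)
        + ∑ l ∈ range (N+1), sw a l * vv a n l * vv a m (l+1) := by
    rw [Finset.sum_range_succ' (fun l => vv a n l * vv a (m+1) l) N,
        Finset.sum_range_succ' (fun l => sw a l * vv a n l * vv a m (l+1)) N]
    have : ∀ i, vv a n (i+1) * vv a (m+1) (i+1)
        = sw a i * vv a n (i+1) * vv a m i + sw a (i+1) * vv a n (i+1) * vv a m (i+2) := by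
      intro i; simp [vv]; ring
    simp only [this, Finset.sum_add_distrib]
    simp [vv]
    ring
  rw [hL, hR, Finset.sum_range_succ (fun l => sw a l * vv a n (l+1) * vv a m l) N,
      Finset.sum_range_succ (fun l => sw a l * vv a n l * vv a m (l+1)) N]
  simp [hvn, hvm]
  ring

lemma BB_shift (a : ℕ → ℕ) (n m : ℕ) : BB a (n+1) m = BB a n (m+1) := by
  rw [← sum_eq_BB a (n+1) m (n+m+2) (by omega), ← sum_eq_BB a n (m+1) (n+m+2) (by omega)]
  exact shift_sum a (n+m+1) n m (by omega) (by omega)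

lemma BB_eq_vv (a : ℕ → ℕ) : ∀ n m, BB a n m = vv a (n+m) 0 := by
  intro n
  induction n with
  | zero =>
      intro m
      simp [BB, vv, mul_comm]
  | succ n ih =>
      intro m
      rw [BB_shift, ih (m+1)]
      ring_nf

lemma BB_diag_pos (a : ℕ → ℕ) (ha : ∀ l, 1 ≤ l → 0 < a l) (n : ℕ) : 0 < BB a n n := by
  rw [BB]
  apply Finset.sum_pos' (fun i _ => mul_self_nonneg _)
  refine ⟨n, Finset.self_mem_range_succ n, ?_⟩
  have := pp_pos a ha n
  rw [vv_diag]
  positivity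

lemma strict_CS (a : ℕ → ℕ) (ha : ∀ l, 1 ≤ l → 0 < a l) (n : ℕ) :
    BB a n (n+2) ^ 2 < BB a n n * BB a (n+2) (n+2) := by
  set A := BB a n n with hA
  set C := BB a (n+2) (n+2) with hC
  set D := BB a n (n+2) with hD
  have hApos : 0 < A := BB_diag_pos a ha n
  have h1 : ∑ l ∈ range (n+3), vv a n l * vv a n l = A :=
    sum_eq_BB a n n (n+3) (by omega)
  have h2 : ∑ l ∈ range (n+3), vv a n l * vv a (n+2) l = D :=
    sum_eq_BB a n (n+2) (n+3) (by omega)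
  have h3 : ∑ l ∈ range (n+3), vv a (n+2) l * vv a (n+2) l = C :=
    sum_eq_BB a (n+2) (n+2) (n+3) (by omega)
  have hexp : ∑ l ∈ range (n+3), (A * vv a (n+2) l - D * vv a n l) ^ 2
      = A ^ 2 * C - 2 * A * D * D + D ^ 2 * A := by
    have : ∀ l, (A * vv a (n+2) l - D * vv a n l) ^ 2
        = A ^ 2 * (vv a (n+2) l * vv a (n+2) l)
          - 2 * A * D * (vv a n l * vv a (n+2) l)
          + D ^ 2 * (vv a n l * vv a n l) := by
      intro l; ring
    simp only [this, Finset.sum_add_distrib, Finset.sum_sub_distrib, ← Finset.mul_sum]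
    rw [h1, h2, h3]
  have hpos : 0 < ∑ l ∈ range (n+3), (A * vv a (n+2) l - D * vv a n l) ^ 2 := by
    have hmem : n + 2 ∈ range (n+3) := by simp
    have hterm : 0 < (A * vv a (n+2) (n+2) - D * vv a n (n+2)) ^ 2 := by
      rw [vv_zero a n (n+2) (by omega), vv_diag]
      have := pp_pos a ha (n+2)
      have hne : A * pp a (n+2) - D * 0 ≠ 0 := by
        simp only [mul_zero, sub_zero]
        positivity
      positivity
    calc (0:ℝ) < (A * vv a (n+2) (n+2) - D * vv a n (n+2)) ^ 2 := hterm
      _ ≤ _ := Finset.single_le_sum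
        (f := fun l => (A * vv a (n+2) l - D * vv a n l) ^ 2) (fun i _ => sq_nonneg _) hmem
  rw [hexp] at hpos
  nlinarith [hApos]

lemma M_link (a : ℕ → ℕ) (ha : ∀ l, 1 ≤ l → 0 < a l) (M : ℕ → ℕ → ℝ)
    (hMdiag : ∀ n, M n n = 1)
    (hM0 : ∀ n, M (2 * n + 2) 0 = M (2 * n + 1) 1)
    (hMrec : ∀ n l, 0 < l → l < n →
      M n l = M (n - 1) (l - 1) + (a (l + 1) : ℝ) * M (n - 1) (l + 1)) :
    ∀ n l, l ≤ n → (n - l) % 2 = 0 → pp a l * M n l = vv a n l := by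
  intro n
  induction n with
  | zero =>
      intro l hl _
      interval_cases l
      simp [pp, hMdiag, vv]
  | succ n ih =>
      intro l hl hpar
      rcases Nat.eq_or_lt_of_le hl with heq | hlt
      · subst heq
        rw [hMdiag, vv_diag, mul_one]
      · -- l ≤ n, and parity forces l < n as well when l ≥ 1
        have hln : l ≤ n := by omega
        cases l with
        | zero =>
            obtain ⟨k, hk⟩ : ∃ k, n = 2 * k + 1 := ⟨n / 2, by omega⟩
            have h1 : M (n+1) 0 = M n 1 := by
              have := hM0 k
              rw [hk]
              convert this using 2 <;> omega
            have hih : pp a 1 * M n 1 = vv a n 1 := ih 1 (by omega) (by omega)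
            have hpp1 : pp a 1 = 1 := by simp [pp, sw]
            rw [hpp1, one_mul] at hih
            have hpp0 : pp a 0 = 1 := by simp [pp]
            have hv : vv a (n+1) 0 = sw a 0 * vv a n 1 := rfl
            rw [hpp0, one_mul, h1, hv, hih]
            simp [sw]
        | succ m =>
            have hmn : m + 2 ≤ n := by omega
            have hrec := hMrec (n+1) (m+1) (by omega) (by omega)
            simp only [Nat.add_sub_cancel, Nat.succ_sub_one] at hrec
            have ih1 : pp a m * M n m = vv a n m := ih m (by omega) (by omega)
            have ih2 : pp a (m+2) * M n (m+2) = vv a n (m+2) := ih (m+2) (by omega) (by omega)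
            have hv : vv a (n+1) (m+1) = sw a m * vv a n m + sw a (m+1) * vv a n (m+2) := rfl
            have hppm : pp a (m+1) = pp a m * sw a m := by
              simp [pp, Finset.prod_range_succ]
            have hppm2 : pp a (m+2) = pp a (m+1) * sw a (m+1) := by
              simp [pp, Finset.prod_range_succ]
            have hsq : (a (m+2) : ℝ) = sw a (m+1) * sw a (m+1) := by
              have := sw_sq a m
              nlinarith [this]
            rw [hrec, hv, ← ih1, ← ih2, hppm2, hppm,
              show m+1+1 = m+2 from rfl, hsq]
            ring

/-- For the quantities `M(n,l)` defined by the recursion `M(n,n)=1`,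
`M(2n+2,0)=M(2n+1,1)`, `M(n,l)=M(n-1,l-1)+a_{l+1}·M(n-1,l+1)` (with positive integers
`a l`), the sequence `n ↦ M(2n,0)/M(2n+2,0)` is strictly decreasing for `n ≥ 1`. -/
theorem M_ratio_strict_anti (a : ℕ → ℕ) (ha : ∀ l, 1 ≤ l → 0 < a l)
    (M : ℕ → ℕ → ℝ)
    (hMdiag : ∀ n, M n n = 1)
    (hM0 : ∀ n, M (2 * n + 2) 0 = M (2 * n + 1) 1)
    (hMrec : ∀ n l, 0 < l → l < n →
      M n l = M (n - 1) (l - 1) + (a (l + 1) : ℝ) * M (n - 1) (l + 1))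
    (hMpos : ∀ n l, l ≤ n → (n - l) % 2 = 0 → 0 < M n l) :
    ∀ n, 1 ≤ n →
      M (2 * (n + 1)) 0 / M (2 * (n + 1) + 2) 0 < M (2 * n) 0 / M (2 * n + 2) 0 := by
  intro n _
  have hμ : ∀ k, M (2 * k) 0 = BB a k k := by
    intro k
    have h := M_link a ha M hMdiag hM0 hMrec (2 * k) 0 (by omega) (by omega)
    have hpp0 : pp a 0 = 1 := by simp [pp]
    rw [hpp0, one_mul] at h
    rw [h, BB_eq_vv]
    norm_num [two_mul]
  have hpos : ∀ k, 0 < M (2 * k) 0 := fun k => hMpos (2 * k) 0 (by omega) (by omega)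
  have e1 : M (2 * n + 2) 0 = M (2 * (n + 1)) 0 := by ring_nf
  have e2 : M (2 * (n + 1) + 2) 0 = M (2 * (n + 2)) 0 := by ring_nf
  rw [e1, e2, div_lt_div_iff₀ (hpos (n+2)) (hpos (n+1))]
  have hshift : BB a (n+1) (n+1) = BB a n (n+2) := by
    rw [BB_eq_vv, BB_eq_vv]
    ring_nf
  have hcs := strict_CS a ha n
  rw [hμ (n+1), hμ n, hμ (n+2), hshift]
  nlinarith [hcs]
end

section
/- Let (a_l)_{l≥1} be positive integers and M(n,l) defined by M(n,n)=1, M(2n+2,0)=M(2n+1,1), M(n,l)=M(n-1,l-1)+a_{l+1}·M(n-1,l+1) for 0<l<n. Then the sequence M(2n,0)/M(2n+2,0) tends to 0 as n → ∞ if and only if the sequence (a_l) is unbounded. -/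
open Filter Finset

namespace MRatioAux

variable (a : ℕ → ℕ)

/-- One step of the transfer recursion. -/
noncomputable def mstep (v : ℕ → ℝ) : ℕ → ℝ :=
  fun l => if l = 0 then v 1 else v (l - 1) + (a (l + 1) : ℝ) * v (l + 1)

/-- The concrete solution of the recursion, extended by zero. -/
noncomputable def W : ℕ → ℕ → ℝ
  | 0 => fun l => if l = 0 then 1 else 0
  | n + 1 => mstep a (W n)

/-- Symmetrizing weights. -/
noncomputable def g : ℕ → ℝ := fun l => ∏ j ∈ Finset.Icc 2 l, (a j : ℝ)

lemma g_zero : g a 0 = 1 := by simp [g]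

lemma g_one : g a 1 = 1 := by simp [g]

lemma g_succ {l : ℕ} (hl : 1 ≤ l) : g a (l + 1) = g a l * (a (l + 1) : ℝ) := by
  unfold g; rw [Finset.prod_Icc_succ_top (by omega)]

lemma g_nonneg (l : ℕ) : 0 ≤ g a l := Finset.prod_nonneg fun j _ => by positivity

lemma W_zero_of_lt : ∀ n l, n < l → W a n l = 0 := by
  intro n
  induction n with
  | zero => intro l hl; simp [W]; omega
  | succ n ih =>
    intro l hl
    have hl0 : l ≠ 0 := by omega
    simp only [W, mstep, if_neg hl0]
    rw [ih (l - 1) (by omega), ih (l + 1) (by omega)]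
    ring

lemma W_diag : ∀ n, W a n n = 1 := by
  intro n
  induction n with
  | zero => simp [W]
  | succ n ih =>
    simp only [W, mstep, if_neg (Nat.succ_ne_zero n), Nat.add_sub_cancel]
    rw [ih, W_zero_of_lt a n (n + 2) (by omega)]
    ring

lemma sum_mstep_eq (v w : ℕ → ℝ) (K : ℕ) (hv : v K = 0) :
    ∑ l ∈ Finset.range (K + 1), g a l * mstep a v l * w l
      = ∑ i ∈ Finset.range (K + 1), g a (i + 1) * (v i * w (i + 1))
        + ∑ i ∈ Finset.range (K + 1), g a (i + 1) * (v (i + 1) * w i) := by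
  have e2 : ∑ i ∈ Finset.range (K + 1), g a (i + 1) * (v i * w (i + 1))
      = ∑ i ∈ Finset.range K, g a (i + 1) * (v i * w (i + 1)) := by
    rw [Finset.sum_range_succ, hv]; ring
  have e3 : ∑ i ∈ Finset.range (K + 1), g a (i + 1) * (v (i + 1) * w i)
      = ∑ i ∈ Finset.range K, g a (i + 1 + 1) * (v (i + 1 + 1) * w (i + 1))
        + v 1 * w 0 := by
    rw [Finset.sum_range_succ' (fun i => g a (i + 1) * (v (i + 1) * w i)) K]
    rw [g_one]; ring
  have e0 : ∑ l ∈ Finset.range (K + 1), g a l * mstep a v l * w l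
      = ∑ i ∈ Finset.range K, (g a (i + 1) * (v i * w (i + 1))
          + g a (i + 1 + 1) * (v (i + 1 + 1) * w (i + 1)))
        + v 1 * w 0 := by
    rw [Finset.sum_range_succ' (fun l => g a l * mstep a v l * w l) K]
    have h0 : g a 0 * mstep a v 0 * w 0 = v 1 * w 0 := by
      simp [mstep, g_zero]
    have h1 : ∀ i, g a (i + 1) * mstep a v (i + 1) * w (i + 1)
        = g a (i + 1) * (v i * w (i + 1)) + g a (i + 1 + 1) * (v (i + 1 + 1) * w (i + 1)) := by
      intro i
      simp only [mstep, if_neg (Nat.succ_ne_zero i), Nat.add_sub_cancel]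
      rw [g_succ a (show 1 ≤ i + 1 by omega)]
      ring
    simp only [h1, h0]
  rw [e0, e2, e3, Finset.sum_add_distrib]; ring

lemma sum_mstep_symm (v w : ℕ → ℝ) (K : ℕ) (hv : v K = 0) (hw : w K = 0) :
    ∑ l ∈ Finset.range (K + 1), g a l * mstep a v l * w l
      = ∑ l ∈ Finset.range (K + 1), g a l * v l * mstep a w l := by
  have h : ∑ l ∈ Finset.range (K + 1), g a l * v l * mstep a w l
      = ∑ l ∈ Finset.range (K + 1), g a l * mstep a w l * v l :=
    Finset.sum_congr rfl fun i _ => by ring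
  rw [sum_mstep_eq a v w K hv, h, sum_mstep_eq a w v K hw]
  have h2 : ∀ s : Finset ℕ, ∑ i ∈ s, g a (i + 1) * (w i * v (i + 1))
      = ∑ i ∈ s, g a (i + 1) * (v (i + 1) * w i) :=
    fun s => Finset.sum_congr rfl fun i _ => by ring
  have h3 : ∀ s : Finset ℕ, ∑ i ∈ s, g a (i + 1) * (w (i + 1) * v i)
      = ∑ i ∈ s, g a (i + 1) * (v i * w (i + 1)) :=
    fun s => Finset.sum_congr rfl fun i _ => by ring
  rw [h2, h3]; ring

lemma phi_step (p q K : ℕ) (hp : p < K) (hq : q < K) :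
    ∑ l ∈ Finset.range (K + 1), g a l * W a (p + 1) l * W a q l
      = ∑ l ∈ Finset.range (K + 1), g a l * W a p l * W a (q + 1) l := by
  have h := sum_mstep_symm a (W a p) (W a q) K
    (W_zero_of_lt a p K hp) (W_zero_of_lt a q K hq)
  exact h

lemma phi_eq : ∀ q p K : ℕ, p + q ≤ K →
    ∑ l ∈ Finset.range (K + 1), g a l * W a p l * W a q l = W a (p + q) 0 := by
  intro q
  induction q with
  | zero =>
    intro p K _
    rw [Finset.sum_eq_single 0]
    · simp [W, g_zero]
    · intro l _ hl
      have : W a 0 l = 0 := by simp [W, hl]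
      rw [this]; ring
    · intro h; exact absurd (Finset.mem_range.2 (by omega)) h
  | succ q ih =>
    intro p K hpq
    rw [← phi_step a p q K (by omega) (by omega), ih (p + 1) K (by omega),
      show p + 1 + q = p + (q + 1) by omega]

lemma logconvex (n : ℕ) :
    W a (2 * n + 2) 0 * W a (2 * n + 2) 0 ≤ W a (2 * n) 0 * W a (2 * n + 4) 0 := by
  set K := 2 * n + 4 with hK
  have e1 : W a (2 * n + 2) 0
      = ∑ l ∈ Finset.range (K + 1), g a l * W a n l * W a (n + 2) l := by
    rw [phi_eq a (n + 2) n K (by omega), show n + (n + 2) = 2 * n + 2 by omega]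
  have e2 : W a (2 * n) 0
      = ∑ l ∈ Finset.range (K + 1), g a l * W a n l * W a n l := by
    rw [phi_eq a n n K (by omega), show n + n = 2 * n by omega]
  have e3 : W a (2 * n + 4) 0
      = ∑ l ∈ Finset.range (K + 1), g a l * W a (n + 2) l * W a (n + 2) l := by
    rw [phi_eq a (n + 2) (n + 2) K (by omega), show n + 2 + (n + 2) = 2 * n + 4 by omega]
  rw [e1, e2, e3]
  have cs := Finset.sum_mul_sq_le_sq_mul_sq (Finset.range (K + 1))
    (fun l => Real.sqrt (g a l) * W a n l) (fun l => Real.sqrt (g a l) * W a (n + 2) l)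
  have b1 : ∀ l, (Real.sqrt (g a l) * W a n l) * (Real.sqrt (g a l) * W a (n + 2) l)
      = g a l * W a n l * W a (n + 2) l := by
    intro l
    rw [show (Real.sqrt (g a l) * W a n l) * (Real.sqrt (g a l) * W a (n + 2) l)
      = (Real.sqrt (g a l) * Real.sqrt (g a l)) * (W a n l * W a (n + 2) l) by ring,
      Real.mul_self_sqrt (g_nonneg a l)]
    ring
  have b2 : ∀ l, (Real.sqrt (g a l) * W a n l) ^ 2 = g a l * W a n l * W a n l := by
    intro l
    rw [show (Real.sqrt (g a l) * W a n l) ^ 2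
      = (Real.sqrt (g a l) * Real.sqrt (g a l)) * (W a n l * W a n l) by ring,
      Real.mul_self_sqrt (g_nonneg a l)]
    ring
  have b3 : ∀ l, (Real.sqrt (g a l) * W a (n + 2) l) ^ 2
      = g a l * W a (n + 2) l * W a (n + 2) l := by
    intro l
    rw [show (Real.sqrt (g a l) * W a (n + 2) l) ^ 2
      = (Real.sqrt (g a l) * Real.sqrt (g a l)) * (W a (n + 2) l * W a (n + 2) l) by ring,
      Real.mul_self_sqrt (g_nonneg a l)]
    ring
  simp only [b1, b2, b3] at cs
  calc (∑ l ∈ Finset.range (K + 1), g a l * W a n l * W a (n + 2) l)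
        * (∑ l ∈ Finset.range (K + 1), g a l * W a n l * W a (n + 2) l)
      = (∑ l ∈ Finset.range (K + 1), g a l * W a n l * W a (n + 2) l) ^ 2 := by ring
    _ ≤ _ := cs

/-- A geometric growth contradiction. -/
lemma geom_contra (B c D : ℝ) (hB : 0 < B) (hc : 0 < c)
    (h : ∀ k : ℕ, (B + 1) ^ k * c ≤ D * B ^ k) : False := by
  obtain ⟨k, hk⟩ := pow_unbounded_of_one_lt (D / c)
    (show (1 : ℝ) < (B + 1) / B from (one_lt_div hB).2 (by linarith))
  rw [div_pow] at hk
  have := (div_lt_div_iff₀ hc (pow_pos hB k)).1 hk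
  linarith [h k]

end MRatioAux

open MRatioAux

section Mlemmas

variable {a : ℕ → ℕ} {M : ℕ → ℕ → ℝ} (ha : ∀ l, 1 ≤ l → 0 < a l)
    (hMdiag : ∀ n, M n n = 1)
    (hM0 : ∀ n, M (2 * n + 2) 0 = M (2 * n + 1) 1)
    (hMrec : ∀ n l, 0 < l → l < n →
      M n l = M (n - 1) (l - 1) + (a (l + 1) : ℝ) * M (n - 1) (l + 1))
    (hMpos : ∀ n l, l ≤ n → (n - l) % 2 = 0 → 0 < M n l)

include hMdiag hM0 hMrec in
lemma W_eq_M : ∀ n l, l ≤ n → (n + l) % 2 = 0 → W a n l = M n l := by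
  intro n
  induction n with
  | zero =>
    intro l hl _
    interval_cases l
    simpa [W] using (hMdiag 0).symm
  | succ n ih =>
    intro l hl hpar
    rcases Nat.eq_zero_or_pos l with h0 | hpos
    · subst h0
      obtain ⟨k, hk⟩ : ∃ k, n + 1 = 2 * k + 2 := ⟨(n - 1) / 2, by omega⟩
      have h2 : M (n + 1) 0 = M n 1 := by
        rw [hk, hM0 k, show 2 * k + 1 = n by omega]
      rw [h2]
      have : W a (n + 1) 0 = W a n 1 := by simp [W, mstep]
      rw [this]
      exact ih 1 (by omega) (by omega)
    · rcases Nat.lt_or_ge l (n + 1) with hlt | hge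
      · have hl1 : l ≤ n - 1 := by omega
        have hne : l ≠ 0 := by omega
        have hstep : W a (n + 1) l = W a n (l - 1) + (a (l + 1) : ℝ) * W a n (l + 1) := by
          simp only [W, mstep, if_neg hne]
        rw [hstep, ih (l - 1) (by omega) (by omega), ih (l + 1) (by omega) (by omega),
          hMrec (n + 1) l hpos hlt]
        simp
      · have : l = n + 1 := by omega
        subst this
        rw [W_diag, hMdiag]

include ha hMdiag hM0 hMrec hMpos in
lemma step_down : ∀ m l, l < m → (m - l) % 2 = 0 → M (m - 1) (l + 1) ≤ M m l := by
  intro m l hlm hpar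
  rcases Nat.eq_zero_or_pos l with h0 | hpos
  · subst h0
    obtain ⟨k, hk⟩ : ∃ k, m = 2 * k + 2 := ⟨(m - 2) / 2, by omega⟩
    rw [hk, hM0 k, show 2 * k + 2 - 1 = 2 * k + 1 by omega]
  · rw [hMrec m l hpos hlm]
    have hp1 : 0 < M (m - 1) (l - 1) := hMpos _ _ (by omega) (by omega)
    have hp2 : 0 < M (m - 1) (l + 1) := hMpos _ _ (by omega) (by omega)
    have hc : (1 : ℝ) ≤ (a (l + 1) : ℝ) := by exact_mod_cast ha (l + 1) (by omega)
    nlinarith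

include ha hMdiag hMrec hMpos in
lemma step_diagless : ∀ m l, 0 < l → l ≤ m → (m - l) % 2 = 0 → M (m - 1) (l - 1) ≤ M m l := by
  intro m l hpos hlm hpar
  rcases Nat.lt_or_ge l m with hlt | hge
  · rw [hMrec m l hpos hlt]
    have hp2 : 0 < M (m - 1) (l + 1) := hMpos _ _ (by omega) (by omega)
    have hc : (0 : ℝ) ≤ (a (l + 1) : ℝ) := by positivity
    nlinarith
  · have : l = m := by omega
    subst this
    rw [hMdiag, hMdiag]

include ha hMdiag hM0 hMrec hMpos in
lemma bounce (l : ℕ) (hl : 2 ≤ l) : ∀ k, (a l : ℝ) ^ k ≤ M (l - 1 + 2 * k) (l - 1) := by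
  intro k
  induction k with
  | zero => simp [hMdiag]
  | succ k ih =>
    have hrec : M (l - 1 + 2 * (k + 1)) (l - 1)
        = M (l - 1 + 2 * (k + 1) - 1) (l - 1 - 1)
          + (a (l - 1 + 1) : ℝ) * M (l - 1 + 2 * (k + 1) - 1) (l - 1 + 1) :=
      hMrec _ _ (by omega) (by omega)
    rw [show l - 1 + 1 = l by omega] at hrec
    have hB : M (l - 1 + 2 * k) (l - 1) ≤ M (l - 1 + 2 * (k + 1) - 1) l := by
      have h := step_diagless ha hMdiag hMrec hMpos (l - 1 + 2 * (k + 1) - 1) l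
        (by omega) (by omega) (by omega)
      rwa [show l - 1 + 2 * (k + 1) - 1 - 1 = l - 1 + 2 * k by omega] at h
    have hp0 : 0 < M (l - 1 + 2 * (k + 1) - 1) (l - 1 - 1) := hMpos _ _ (by omega) (by omega)
    have hc : (1 : ℝ) ≤ (a l : ℝ) := by exact_mod_cast ha l (by omega)
    have hMk : (0 : ℝ) < M (l - 1 + 2 * k) (l - 1) := hMpos _ _ (by omega) (by omega)
    calc (a l : ℝ) ^ (k + 1) = (a l : ℝ) * (a l : ℝ) ^ k := by ring
      _ ≤ (a l : ℝ) * M (l - 1 + 2 * k) (l - 1) := by nlinarith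
      _ ≤ (a l : ℝ) * M (l - 1 + 2 * (k + 1) - 1) l := by nlinarith
      _ ≤ M (l - 1 + 2 * (k + 1)) (l - 1) := by nlinarith

include ha hMdiag hM0 hMrec hMpos in
lemma descend (n : ℕ) : ∀ j, j ≤ n → M (2 * n - j) j ≤ M (2 * n) 0 := by
  intro j
  induction j with
  | zero => intro _; simp
  | succ j ih =>
    intro hj
    have h1 : M (2 * n - j - 1) (j + 1) ≤ M (2 * n - j) j :=
      step_down ha hMdiag hM0 hMrec hMpos (2 * n - j) j (by omega) (by omega)
    rw [show 2 * n - j - 1 = 2 * n - (j + 1) by omega] at h1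
    exact le_trans h1 (ih (by omega))

include ha hMdiag hM0 hMrec hMpos in
lemma lowerbound (l n : ℕ) (hl : 2 ≤ l) (hn : l ≤ n) :
    (a l : ℝ) ^ (n - l + 1) ≤ M (2 * n) 0 := by
  calc (a l : ℝ) ^ (n - l + 1) ≤ M (l - 1 + 2 * (n - l + 1)) (l - 1) :=
        bounce ha hMdiag hM0 hMrec hMpos l hl (n - l + 1)
    _ = M (2 * n - (l - 1)) (l - 1) := by rw [show l - 1 + 2 * (n - l + 1) = 2 * n - (l - 1) by omega]
    _ ≤ M (2 * n) 0 := descend ha hMdiag hM0 hMrec hMpos n (l - 1) (by omega)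

include hMdiag hM0 hMrec hMpos in
lemma upperbound (N : ℕ) (hN : ∀ l, 1 ≤ l → a l ≤ N) :
    ∀ n l, l ≤ n → (n - l) % 2 = 0 → M n l ≤ ((N : ℝ) + 1) ^ n := by
  intro n
  induction n with
  | zero =>
    intro l hl _
    interval_cases l
    rw [hMdiag 0, pow_zero]
  | succ n ih =>
    intro l hl hpar
    have hN1 : (1 : ℝ) ≤ (N : ℝ) + 1 := le_add_of_nonneg_left (Nat.cast_nonneg N)
    rcases Nat.eq_zero_or_pos l with h0 | hpos
    · subst h0
      obtain ⟨k, hk⟩ : ∃ k, n + 1 = 2 * k + 2 := ⟨(n - 1) / 2, by omega⟩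
      have h2 : M (n + 1) 0 = M n 1 := by
        rw [hk, hM0 k, show 2 * k + 1 = n by omega]
      rw [h2]
      calc M n 1 ≤ ((N : ℝ) + 1) ^ n := ih 1 (by omega) (by omega)
        _ ≤ ((N : ℝ) + 1) ^ (n + 1) := pow_le_pow_right₀ hN1 (by omega)
    · rcases Nat.lt_or_ge l (n + 1) with hlt | hge
      · have hrec := hMrec (n + 1) l hpos hlt
        simp only [Nat.add_sub_cancel] at hrec
        rw [hrec]
        have ih1 : M n (l - 1) ≤ ((N : ℝ) + 1) ^ n := ih (l - 1) (by omega) (by omega)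
        have ih2 : M n (l + 1) ≤ ((N : ℝ) + 1) ^ n := ih (l + 1) (by omega) (by omega)
        have hMp : 0 < M n (l + 1) := hMpos n (l + 1) (by omega) (by omega)
        have hcast : (a (l + 1) : ℝ) ≤ (N : ℝ) := by exact_mod_cast hN (l + 1) (by omega)
        have key : (a (l + 1) : ℝ) * M n (l + 1) ≤ (N : ℝ) * (((N : ℝ) + 1) ^ n) :=
          mul_le_mul hcast ih2 hMp.le (Nat.cast_nonneg N)
        have hps : ((N : ℝ) + 1) ^ (n + 1) = ((N : ℝ) + 1) ^ n * ((N : ℝ) + 1) := pow_succ _ _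
        linarith
      · have : l = n + 1 := by omega
        subst this
        rw [hMdiag]
        calc (1 : ℝ) = ((N : ℝ) + 1) ^ 0 := (pow_zero _).symm
          _ ≤ ((N : ℝ) + 1) ^ (n + 1) := pow_le_pow_right₀ hN1 (Nat.zero_le _)
end Mlemmas

/-- For the quantities `M(n,l)` defined by the recursion `M(n,n)=1`,
`M(2n+2,0)=M(2n+1,1)`, `M(n,l)=M(n-1,l-1)+a_{l+1}·M(n-1,l+1)` (with positive integers
`a l`), the ratios `M(2n,0)/M(2n+2,0)` tend to `0` iff `(a l)` is unbounded. -/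
theorem M_ratio_tendsto_zero_iff_unbounded (a : ℕ → ℕ) (ha : ∀ l, 1 ≤ l → 0 < a l)
    (M : ℕ → ℕ → ℝ)
    (hMdiag : ∀ n, M n n = 1)
    (hM0 : ∀ n, M (2 * n + 2) 0 = M (2 * n + 1) 1)
    (hMrec : ∀ n l, 0 < l → l < n →
      M n l = M (n - 1) (l - 1) + (a (l + 1) : ℝ) * M (n - 1) (l + 1))
    (hMpos : ∀ n l, l ≤ n → (n - l) % 2 = 0 → 0 < M n l) :
    Tendsto (fun n => M (2 * n) 0 / M (2 * n + 2) 0) atTop (nhds 0) ↔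
      ∀ N : ℕ, ∃ l, 1 ≤ l ∧ N < a l := by
  have hmpos : ∀ n : ℕ, 0 < M (2 * n) 0 := fun n => hMpos (2 * n) 0 (by omega) (by omega)
  have hm2 : ∀ n : ℕ, M (2 * n + 2) 0 = M (2 * (n + 1)) 0 := fun n => by
    rw [show 2 * (n + 1) = 2 * n + 2 by ring]
  constructor
  · -- ratios → 0  ⇒  (a l) unbounded
    intro h N
    by_contra hcon
    push_neg at hcon
    set B : ℝ := ((N : ℝ) + 1) ^ 2 with hBdef
    have hBpos : 0 < B := by positivity
    have hub : ∀ n : ℕ, M (2 * n) 0 ≤ B ^ n := by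
      intro n
      have h1 := upperbound hMdiag hM0 hMrec hMpos N hcon (2 * n) 0 (by omega) (by omega)
      rw [hBdef, ← pow_mul]
      exact h1
    have hpos' : ∀ᶠ n in atTop, M (2 * n) 0 / M (2 * n + 2) 0 ∈ Set.Ioi (0 : ℝ) :=
      Eventually.of_forall fun n =>
        div_pos (hmpos n) (by rw [hm2 n]; exact hmpos (n + 1))
    have h' : Tendsto (fun n => (M (2 * n) 0 / M (2 * n + 2) 0)⁻¹) atTop atTop :=
      Filter.Tendsto.inv_tendsto_nhdsGT_zero
        (tendsto_nhdsWithin_of_tendsto_nhds_of_eventually_within _ h hpos')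
    have hr : Tendsto (fun n => M (2 * (n + 1)) 0 / M (2 * n) 0) atTop atTop := by
      apply h'.congr
      intro n
      rw [inv_div, hm2 n]
    obtain ⟨n0, hn0⟩ := eventually_atTop.1 (hr.eventually_ge_atTop (B + 1))
    have grow : ∀ k : ℕ, (B + 1) ^ k * M (2 * n0) 0 ≤ M (2 * (n0 + k)) 0 := by
      intro k
      induction k with
      | zero => simp
      | succ k ih =>
        have hg : B + 1 ≤ M (2 * (n0 + k + 1)) 0 / M (2 * (n0 + k)) 0 := hn0 (n0 + k) (by omega)
        have hmk := hmpos (n0 + k)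
        have hstep : (B + 1) * M (2 * (n0 + k)) 0 ≤ M (2 * (n0 + k + 1)) 0 :=
          (le_div_iff₀ hmk).1 hg
        have hn0k : n0 + (k + 1) = n0 + k + 1 := by omega
        rw [hn0k]
        calc (B + 1) ^ (k + 1) * M (2 * n0) 0
            = (B + 1) * ((B + 1) ^ k * M (2 * n0) 0) := by ring
          _ ≤ (B + 1) * M (2 * (n0 + k)) 0 := by nlinarith [hmpos n0]
          _ ≤ M (2 * (n0 + k + 1)) 0 := hstep
    exact geom_contra B (M (2 * n0) 0) (B ^ n0) hBpos (hmpos n0) fun k =>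
      le_trans (grow k) (by rw [← pow_add]; exact hub (n0 + k))
  · -- (a l) unbounded  ⇒  ratios → 0
    intro hU
    have hWM : ∀ n : ℕ, W a (2 * n) 0 = M (2 * n) 0 := fun n =>
      W_eq_M hMdiag hM0 hMrec (2 * n) 0 (by omega) (by omega)
    have lc : ∀ n : ℕ, M (2 * (n + 1)) 0 * M (2 * (n + 1)) 0
        ≤ M (2 * n) 0 * M (2 * (n + 2)) 0 := by
      intro n
      have h1 := logconvex a n
      rw [show 2 * n + 2 = 2 * (n + 1) by ring, show 2 * n + 4 = 2 * (n + 2) by ring,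
        hWM, hWM, hWM] at h1
      exact h1
    set r : ℕ → ℝ := fun n => M (2 * (n + 1)) 0 / M (2 * n) 0 with hrdef
    have hrpos : ∀ n, 0 < r n := fun n => div_pos (hmpos (n + 1)) (hmpos n)
    have rmono : Monotone r := by
      apply monotone_nat_of_le_succ
      intro n
      rw [hrdef]
      dsimp only
      rw [div_le_div_iff₀ (hmpos n) (hmpos (n + 1))]
      calc M (2 * (n + 1)) 0 * M (2 * (n + 1)) 0
          ≤ M (2 * n) 0 * M (2 * (n + 2)) 0 := lc n
        _ = M (2 * (n + 1 + 1)) 0 * M (2 * n) 0 := by rw [show n + 2 = n + 1 + 1 by omega]; ring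
    have H : ∀ C : ℝ, 1 ≤ C → ∃ n, C < r n := by
      intro C hC
      by_contra hno
      push_neg at hno
      have hm : ∀ n, M (2 * n) 0 ≤ C ^ n := by
        intro n
        induction n with
        | zero =>
          have : M 0 0 = 1 := hMdiag 0
          simpa [this] using le_refl (1 : ℝ)
        | succ n ih =>
          have h1 : M (2 * (n + 1)) 0 = r n * M (2 * n) 0 := by
            rw [hrdef]; dsimp only; rw [div_mul_cancel₀ _ (hmpos n).ne']
          rw [h1, pow_succ]
          have := hno n
          nlinarith [hmpos n, hrpos n, pow_pos (lt_of_lt_of_le one_pos hC) n]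
      obtain ⟨K, hK⟩ := exists_nat_ge C
      obtain ⟨l, hl1, hla⟩ := hU (K + a 1)
      have hl2 : 2 ≤ l := by
        rcases Nat.lt_or_ge l 2 with h2 | h2
        · interval_cases l <;> omega
        · exact h2
      have hapos : (0 : ℝ) < (a l : ℝ) := by exact_mod_cast ha l (by omega)
      have hCa : C + 1 ≤ (a l : ℝ) := by
        have h3 : K + 1 ≤ a l := by omega
        have h4 : ((K : ℝ) + 1 : ℝ) ≤ (a l : ℝ) := by exact_mod_cast h3
        linarith
      apply geom_contra C (a l : ℝ) (C ^ l) (by linarith) hapos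
      intro k
      have h1 : ((a l : ℝ)) ^ (l + k - l + 1) ≤ M (2 * (l + k)) 0 :=
        lowerbound ha hMdiag hM0 hMrec hMpos l (l + k) hl2 (by omega)
      rw [show l + k - l + 1 = k + 1 by omega] at h1
      have h3 : M (2 * (l + k)) 0 ≤ C ^ (l + k) := hm (l + k)
      have h4 : (C + 1) ^ k ≤ (a l : ℝ) ^ k := pow_le_pow_left₀ (by linarith) hCa k
      calc (C + 1) ^ k * (a l : ℝ) ≤ (a l : ℝ) ^ k * (a l : ℝ) :=
            mul_le_mul_of_nonneg_right h4 hapos.le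
        _ = (a l : ℝ) ^ (k + 1) := by ring
        _ ≤ C ^ (l + k) := le_trans h1 h3
        _ = C ^ l * C ^ k := by rw [pow_add]
    have hr : Tendsto r atTop atTop := by
      rw [tendsto_atTop]
      intro b
      obtain ⟨n, hn⟩ := H (max b 1) (le_max_right _ _)
      filter_upwards [eventually_ge_atTop n] with mm hmm
      exact le_trans (le_trans (le_max_left b 1) hn.le) (rmono hmm)
    have hinv : Tendsto (fun n => (r n)⁻¹) atTop (nhds 0) := hr.inv_tendsto_atTop
    apply hinv.congr
    intro n
    rw [hrdef]
    dsimp only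
    rw [inv_div, hm2 n]
end

section
/- With a_l = l for all l ≥ 1 (the Brauer algebra case), the quantities M(2n,0) defined by M(n,n)=1, M(2n+2,0)=M(2n+1,1), M(n,l)=M(n-1,l-1)+(l+1)·M(n-1,l+1) satisfy: for every M > 0 there is C > 0 with M(2n,0) > C·M^n for all n. -/
/-- For `a l = l` (the Brauer algebra case), the quantities `M(2n,0)` defined by
`M(n,n)=1`, `M(2n+2,0)=M(2n+1,1)`, `M(n,l)=M(n-1,l-1)+(l+1)·M(n-1,l+1)` grow faster
than any geometric sequence. -/
theorem M_Brauer_supergeom (M : ℕ → ℕ → ℝ)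
    (hMdiag : ∀ n, M n n = 1)
    (hM0 : ∀ n, M (2 * n + 2) 0 = M (2 * n + 1) 1)
    (hMrec : ∀ n l, 0 < l → l < n →
      M n l = M (n - 1) (l - 1) + ((l : ℝ) + 1) * M (n - 1) (l + 1)) :
    ∀ Mc : ℝ, 0 < Mc → ∃ C : ℝ, 0 < C ∧ ∀ n, C * Mc ^ n < M (2 * n) 0 := by
  -- positivity on the parity-compatible domain
  have hpos : ∀ n l, l ≤ n → n % 2 = l % 2 → 0 < M n l := by
    intro n
    induction n using Nat.strong_induction_on with
    | _ n ih =>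
      intro l hln hpar
      rcases eq_or_lt_of_le hln with h | h
      · subst h; rw [hMdiag]; norm_num
      · rcases Nat.eq_zero_or_pos l with rfl | hl
        · -- l = 0, n even, n ≥ 2
          have hn2 : n % 2 = 0 := hpar
          obtain ⟨k, hk⟩ := (Nat.even_iff.mpr hn2)
          have hkpos : 0 < k := by omega
          obtain ⟨m, hm⟩ := Nat.exists_eq_add_of_le hkpos
          have hn : n = 2 * m + 2 := by omega
          rw [hn, hM0 m]
          refine ih (2 * m + 1) (by omega) 1 (by omega) (by omega)
        · have hl1 : l + 1 ≤ n - 1 := by omega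
          rw [hMrec n l hl h]
          have h1 : 0 < M (n - 1) (l - 1) :=
            ih (n - 1) (by omega) (l - 1) (by omega) (by omega)
          have h2 : 0 < M (n - 1) (l + 1) :=
            ih (n - 1) (by omega) (l + 1) hl1 (by omega)
          positivity
  -- factorial lower bound
  have hgrow : ∀ k l, 1 ≤ l → ((k + l).factorial : ℝ) ≤ (l.factorial : ℝ) * M (l + 2 * k) l := by
    intro k
    induction k with
    | zero =>
      intro l hl
      simp [hMdiag]
    | succ k ih =>
      intro l hl
      have hrec := hMrec (l + 2 * (k + 1)) l hl (by omega)
      have hsimp : l + 2 * (k + 1) - 1 = l + 2 * k + 1 := by omega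
      rw [hsimp] at hrec
      have hnn : 0 ≤ M (l + 2 * k + 1) (l - 1) :=
        le_of_lt (hpos (l + 2 * k + 1) (l - 1) (by omega) (by omega))
      have hih := ih (l + 1) (by omega)
      have harr : l + 1 + 2 * k = l + 2 * k + 1 := by omega
      rw [harr] at hih
      calc ((k + 1 + l).factorial : ℝ)
          = ((k + (l + 1)).factorial : ℝ) := by rw [show k + 1 + l = k + (l + 1) from by omega]
        _ ≤ ((l + 1).factorial : ℝ) * M (l + 2 * k + 1) (l + 1) := hih
        _ = (l.factorial : ℝ) * (((l : ℝ) + 1) * M (l + 2 * k + 1) (l + 1)) := by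
            rw [Nat.factorial_succ]; push_cast; ring
        _ ≤ (l.factorial : ℝ) * M (l + 2 * (k + 1)) l := by
            rw [hrec]
            have hstep : ((l : ℝ) + 1) * M (l + 2 * k + 1) (l + 1) ≤
                M (l + 2 * k + 1) (l - 1) + ((l : ℝ) + 1) * M (l + 2 * k + 1) (l + 1) := by
              linarith
            exact mul_le_mul_of_nonneg_left hstep (by positivity)
  have hfac : ∀ n, (n.factorial : ℝ) ≤ M (2 * n) 0 := by
    intro n
    cases n with
    | zero => simp [hMdiag]
    | succ m =>
      rw [show 2 * (m + 1) = 2 * m + 2 by ring, hM0 m]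
      have h := hgrow m 1 le_rfl
      rw [show 1 + 2 * m = 2 * m + 1 by omega, Nat.factorial_one] at h
      simpa using h
  intro Mc hMc
  -- eventually Mc^n < n!
  have htend := FloorSemiring.tendsto_pow_div_factorial_atTop (K := ℝ) Mc
  have hev : ∀ᶠ n in Filter.atTop, Mc ^ n / (n.factorial : ℝ) < 1 :=
    htend.eventually (gt_mem_nhds one_pos)
  obtain ⟨N, hN⟩ := Filter.eventually_atTop.mp hev
  set C : ℝ := min (1 / 2)
    ((Finset.range (N + 1)).inf' (by simp) (fun n => M (2 * n) 0 / (2 * Mc ^ n))) with hC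
  have hCpos : 0 < C := by
    apply lt_min (by norm_num)
    apply Finset.lt_inf'_iff (α := ℝ) _ |>.mpr
    intro n _
    have := hpos (2 * n) 0 (by omega) (by omega)
    positivity
  refine ⟨C, hCpos, fun n => ?_⟩
  by_cases hn : n ≤ N
  · have hCle : C ≤ M (2 * n) 0 / (2 * Mc ^ n) := le_trans (min_le_right _ _)
      (Finset.inf'_le _ (Finset.mem_range.mpr (by omega)))
    have hMcp : (0:ℝ) < Mc ^ n := by positivity
    have hMp : 0 < M (2 * n) 0 := hpos (2 * n) 0 (by omega) (by omega)
    calc C * Mc ^ n ≤ M (2 * n) 0 / (2 * Mc ^ n) * Mc ^ n :=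
          mul_le_mul_of_nonneg_right hCle (le_of_lt hMcp)
      _ = M (2 * n) 0 / 2 := by field_simp
      _ < M (2 * n) 0 := by linarith
  · have hlt := hN n (by omega)
    have hfp : (0:ℝ) < (n.factorial : ℝ) := by positivity
    have h1 : Mc ^ n < (n.factorial : ℝ) := by
      rwa [div_lt_one hfp] at hlt
    have hMcp : (0:ℝ) < Mc ^ n := by positivity
    have hC2 : C ≤ 1 / 2 := min_le_left _ _
    calc C * Mc ^ n ≤ (1/2) * Mc ^ n := mul_le_mul_of_nonneg_right hC2 (le_of_lt hMcp)
      _ < Mc ^ n := by linarith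
      _ < (n.factorial : ℝ) := h1
      _ ≤ M (2 * n) 0 := hfac n
end

section
/- With a_{2l} = l and a_{2l+1} = 1 (the partition algebra case), the sequence (a_l) is unbounded, hence M(2n,0)/M(2n+2,0) → 0 as n → ∞, where M(n,l) is defined by the recursion M(n,n)=1, M(2n+2,0)=M(2n+1,1), M(n,l)=M(n-1,l-1)+a_{l+1}·M(n-1,l+1). -/
open Filter Finset

namespace MPartAux

variable (a : ℕ → ℕ)

/-- Weighted path count: paths of length `s` from height `l` to height `j`,
up-step from `h` has weight `a (h+1)`, down-step weight 1 (none from 0). -/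
def W : ℕ → ℕ → ℕ → ℝ
  | 0, l, j => if l = j then 1 else 0
  | s+1, l, j => (if l = 0 then 0 else W s (l-1) j) + (a (l+1) : ℝ) * W s (l+1) j

def c (l : ℕ) : ℝ := ∏ i ∈ Finset.range l, (a (i+1) : ℝ)

lemma c_nonneg (l : ℕ) : 0 ≤ c a l :=
  Finset.prod_nonneg fun i _ => by positivity

lemma c_succ (l : ℕ) : c a (l+1) = c a l * (a (l+1) : ℝ) :=
  Finset.prod_range_succ _ _

lemma W_nonneg : ∀ s l j, 0 ≤ W a s l j := by
  intro s
  induction s with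
  | zero => intro l j; simp only [W]; split <;> norm_num
  | succ s ih =>
    intro l j
    simp only [W]
    have h1 : (0:ℝ) ≤ if l = 0 then 0 else W a s (l-1) j := by
      split
      · exact le_refl 0
      · exact ih _ _
    have h2 : (0:ℝ) ≤ (a (l+1) : ℝ) * W a s (l+1) j :=
      mul_nonneg (by positivity) (ih _ _)
    linarith

lemma W_zero_lt : ∀ s l j, s + j < l → W a s l j = 0 := by
  intro s
  induction s with
  | zero => intro l j h; simp only [W]; rw [if_neg]; omega
  | succ s ih =>
    intro l j h
    simp only [W]
    rw [if_neg (by omega), ih (l-1) j (by omega), ih (l+1) j (by omega)]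
    ring

lemma W_zero_gt : ∀ s l j, s + l < j → W a s l j = 0 := by
  intro s
  induction s with
  | zero => intro l j h; simp only [W]; rw [if_neg]; omega
  | succ s ih =>
    intro l j h
    simp only [W]
    have h2 : W a s (l+1) j = 0 := ih (l+1) j (by omega)
    rw [h2]
    split
    · ring
    · rw [ih (l-1) j (by omega)]; ring

lemma W_down : ∀ s, W a s s 0 = 1 := by
  intro s
  induction s with
  | zero => simp [W]
  | succ s ih =>
    simp only [W]
    rw [if_neg (by omega)]
    simp only [Nat.add_sub_cancel, ih]
    rw [W_zero_lt a s (s+2) 0 (by omega)]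
    ring

lemma W_top : ∀ s l, W a s l (l+s) = ∏ i ∈ Finset.range s, (a (l+1+i) : ℝ) := by
  intro s
  induction s with
  | zero => intro l; simp [W]
  | succ s ih =>
    intro l
    simp only [W]
    have h1 : (if l = 0 then (0:ℝ) else W a s (l-1) (l+(s+1))) = 0 := by
      split
      · rfl
      · exact W_zero_gt a s (l-1) (l+(s+1)) (by omega)
    have h2 : l + (s+1) = (l+1) + s := by omega
    rw [h1, h2, ih (l+1), zero_add]
    rw [Finset.prod_range_succ']
    have : ∀ i ∈ Finset.range s, ((a (l+1+1+i) : ℝ)) = (a (l+1+(i+1)) : ℝ) := by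
      intro i _
      rw [show l+1+1+i = l+1+(i+1) from by omega]
    rw [Finset.prod_congr rfl this, mul_comm]

lemma W_zero' (l j : ℕ) : W a 0 l j = if l = j then 1 else 0 := rfl

lemma W_succ (s l j : ℕ) : W a (s+1) l j
    = (if l = 0 then 0 else W a s (l-1) j) + (a (l+1) : ℝ) * W a s (l+1) j := rfl

lemma W_last : ∀ s l j, W a (s+1) l j
    = (if j = 0 then 0 else (a j : ℝ) * W a s l (j-1)) + W a s l (j+1) := by
  intro s
  induction s with
  | zero =>
    intro l j
    have e : W a 1 l j = (if l = 0 then (0:ℝ) else if l - 1 = j then 1 else 0)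
        + (a (l+1) : ℝ) * (if l + 1 = j then 1 else 0) := rfl
    have e2 : W a 0 l (j-1) = if l = j - 1 then (1:ℝ) else 0 := rfl
    have e3 : W a 0 l (j+1) = if l = j + 1 then (1:ℝ) else 0 := rfl
    rw [e, e2, e3]
    split_ifs <;>
      first
        | ring1
        | (exfalso; omega)
        | (have hh : j = l + 1 := by omega
           subst hh
           norm_num)
  | succ s ih =>
    intro l j
    rw [W_succ a (s+1) l j, ih (l-1) j, ih (l+1) j, W_succ a s l (j-1), W_succ a s l (j+1)]
    by_cases hl : l = 0 <;> by_cases hj : j = 0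
    · simp only [if_pos hl, if_pos hj]; ring
    · simp only [if_pos hl, if_neg hj]; ring
    · simp only [if_neg hl, if_pos hj]; ring
    · simp only [if_neg hl, if_neg hj]; ring

lemma CK : ∀ s t l j N, s + l < N →
    W a (s+t) l j = ∑ k ∈ Finset.range N, W a s l k * W a t k j := by
  intro s
  induction s with
  | zero =>
    intro t l j N hN
    rw [Finset.sum_eq_single l]
    · simp [W]
    · intro k _ hk
      simp only [W]
      rw [if_neg (fun h => hk h.symm)]
      ring
    · intro h
      exact absurd (Finset.mem_range.2 (by omega)) h
  | succ s ih =>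
    intro t l j N hN
    have e1 : s + 1 + t = (s + t) + 1 := by omega
    rw [e1]
    show (if l = 0 then 0 else W a (s+t) (l-1) j) + (a (l+1) : ℝ) * W a (s+t) (l+1) j = _
    by_cases hl : l = 0
    · subst hl
      rw [if_pos rfl, zero_add, ih t 1 j N (by omega), Finset.mul_sum]
      refine Finset.sum_congr rfl fun k _ => ?_
      show (a 1 : ℝ) * (W a s 1 k * W a t k j) = W a (s+1) 0 k * W a t k j
      have : W a (s+1) 0 k = (a 1 : ℝ) * W a s 1 k := by
        show (if (0:ℕ) = 0 then (0:ℝ) else _) + (a (0+1) : ℝ) * W a s (0+1) k = _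
        rw [if_pos rfl, zero_add]
      rw [this]; ring
    · rw [if_neg hl, ih t (l-1) j N (by omega), ih t (l+1) j N (by omega), Finset.mul_sum,
        ← Finset.sum_add_distrib]
      refine Finset.sum_congr rfl fun k _ => ?_
      have : W a (s+1) l k = W a s (l-1) k + (a (l+1) : ℝ) * W a s (l+1) k := by
        show (if l = 0 then (0:ℝ) else W a s (l-1) k) + _ = _
        rw [if_neg hl]
      rw [this]; ring

lemma c_zero : c a 0 = 1 := Finset.prod_range_zero _

lemma balance : ∀ s l j, c a l * W a s l j = c a j * W a s j l := by
  intro s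
  induction s with
  | zero =>
    intro l j
    rw [W_zero', W_zero']
    by_cases h : l = j
    · subst h; rfl
    · rw [if_neg h, if_neg (fun hh => h hh.symm)]
      ring
  | succ s ih =>
    intro l j
    rw [W_succ, W_last a s j l]
    by_cases hl : l = 0
    · subst hl
      rw [if_pos rfl, if_pos rfl, zero_add, zero_add, c_zero, one_mul]
      have h1 : (a (0+1) : ℝ) = c a 1 := by
        rw [show c a 1 = c a 0 * (a (0+1) : ℝ) from c_succ a 0, c_zero, one_mul]
      rw [h1, ih 1 j]
      ring
    · rw [if_neg hl, if_neg hl]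
      have hL : l - 1 + 1 = l := by omega
      have e1 : c a l * W a s (l-1) j = (a l : ℝ) * (c a j * W a s j (l-1)) := by
        have h1 : c a l = c a (l-1) * (a l : ℝ) := by
          rw [← hL, c_succ]
          norm_num
        rw [h1, ← ih (l-1) j]
        ring
      have e2 : c a l * ((a (l+1) : ℝ) * W a s (l+1) j) = c a j * W a s j (l+1) := by
        rw [← mul_assoc, ← c_succ, ih (l+1) j]
      rw [mul_add, e1, e2, mul_add]
      ring


section Hyp

variable (haeven : ∀ l, 1 ≤ l → a (2 * l) = l) (haodd : ∀ l, a (2 * l + 1) = 1)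

include haodd in
lemma f_mono (n : ℕ) : W a (2*n) 0 0 ≤ W a (2*(n+1)) 0 0 := by
  have ha1 : a 1 = 1 := by simpa using haodd 0
  have e1 : W a (2*(n+1)) 0 0 = (a 1 : ℝ) * W a (2*n+1) 1 0 := by
    rw [show 2*(n+1) = (2*n+1)+1 from by ring, W_succ, if_pos rfl]
    norm_num
  have e2 : W a (2*n+1) 1 0
      = W a (2*n) 0 0 + (a 2 : ℝ) * W a (2*n) 2 0 := by
    rw [W_succ, if_neg (by omega)]
  rw [e1, e2, ha1]
  have := mul_nonneg (by positivity : (0:ℝ) ≤ (a 2 : ℝ)) (W_nonneg a (2*n) 2 0)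
  push_cast
  linarith

include haodd in
lemma f_ge_one (n : ℕ) : 1 ≤ W a (2*n) 0 0 := by
  induction n with
  | zero => simp [W]
  | succ n ih => exact le_trans ih (f_mono a haodd n)

include haeven haodd in
lemma c_even : ∀ m, c a (2*m) = (m.factorial : ℝ) := by
  intro m
  induction m with
  | zero => simp [c]
  | succ m ih =>
    have e1 : 2*(m+1) = (2*m+1)+1 := by ring
    rw [e1, c_succ, show (2*m+1) = (2*m)+1 from rfl, c_succ, ih]
    have h1 : a (2*m+1) = 1 := haodd m
    have h2 : a (2*m+1+1) = m+1 := by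
      have := haeven (m+1) (by omega)
      rw [show 2*(m+1) = 2*m+1+1 from by ring] at this
      exact this
    rw [h1, h2, Nat.factorial_succ]
    push_cast
    ring

lemma logconv (n : ℕ) (hn : 1 ≤ n) :
    (W a (2*n) 0 0)^2 ≤ W a (2*(n+1)) 0 0 * W a (2*(n-1)) 0 0 := by
  set s := Finset.range (n+2) with hs
  have key : ∀ t k, W a t 0 k = c a k * W a t k 0 := by
    intro t k
    have hb := balance a t 0 k
    rwa [c_zero, one_mul] at hb
  have h1 : W a (2*(n+1)) 0 0
      = ∑ k ∈ s, c a k * (W a (n+1) k 0)^2 := by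
    rw [show 2*(n+1) = (n+1)+(n+1) from by ring, CK a (n+1) (n+1) 0 0 (n+2) (by omega)]
    exact Finset.sum_congr rfl fun k _ => by rw [key]; ring
  have h2 : W a (2*(n-1)) 0 0
      = ∑ k ∈ s, c a k * (W a (n-1) k 0)^2 := by
    rw [show 2*(n-1) = (n-1)+(n-1) from by omega, CK a (n-1) (n-1) 0 0 (n+2) (by omega)]
    exact Finset.sum_congr rfl fun k _ => by rw [key]; ring
  have h3 : W a (2*n) 0 0
      = ∑ k ∈ s, c a k * (W a (n+1) k 0 * W a (n-1) k 0) := by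
    rw [show 2*n = (n+1)+(n-1) from by omega, CK a (n+1) (n-1) 0 0 (n+2) (by omega)]
    exact Finset.sum_congr rfl fun k _ => by rw [key]; ring
  have hcs := Finset.sum_mul_sq_le_sq_mul_sq s
      (fun k => Real.sqrt (c a k) * W a (n+1) k 0)
      (fun k => Real.sqrt (c a k) * W a (n-1) k 0)
  have eab : ∀ k ∈ s, (Real.sqrt (c a k) * W a (n+1) k 0) * (Real.sqrt (c a k) * W a (n-1) k 0)
      = c a k * (W a (n+1) k 0 * W a (n-1) k 0) := by
    intro k _
    rw [mul_mul_mul_comm, Real.mul_self_sqrt (c_nonneg a k)]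
  have ea2 : ∀ k ∈ s, (Real.sqrt (c a k) * W a (n+1) k 0)^2 = c a k * (W a (n+1) k 0)^2 := by
    intro k _
    rw [mul_pow, Real.sq_sqrt (c_nonneg a k)]
  have eb2 : ∀ k ∈ s, (Real.sqrt (c a k) * W a (n-1) k 0)^2 = c a k * (W a (n-1) k 0)^2 := by
    intro k _
    rw [mul_pow, Real.sq_sqrt (c_nonneg a k)]
  rw [Finset.sum_congr rfl eab, Finset.sum_congr rfl ea2, Finset.sum_congr rfl eb2] at hcs
  rw [h1, h2, h3]
  exact hcs

include haeven haodd in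
lemma lowbd (m n : ℕ) (hm : 2*m ≤ n+1) :
    (m.factorial : ℝ) * W a (2*(n+1-2*m)) 0 0 ≤ W a (2*(n+1)) 0 0 := by
  have step1 : (m.factorial : ℝ) ≤ W a (4*m) 0 0 := by
    have hck : W a (4*m) 0 0
        = ∑ k ∈ Finset.range (2*m+1), W a (2*m) 0 k * W a (2*m) k 0 := by
      rw [show 4*m = (2*m)+(2*m) from by ring]
      exact CK a (2*m) (2*m) 0 0 (2*m+1) (by omega)
    have htop : W a (2*m) 0 (2*m) = (m.factorial : ℝ) := by
      have h := W_top a (2*m) 0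
      rw [show 0 + 2*m = 2*m from by omega] at h
      rw [h, ← c_even a haeven haodd m]
      exact Finset.prod_congr rfl fun i _ => by rw [Nat.add_comm 1 i]
    have hsingle := Finset.single_le_sum
        (f := fun k => W a (2*m) 0 k * W a (2*m) k 0)
        (fun k _ => mul_nonneg (W_nonneg a _ _ _) (W_nonneg a _ _ _))
        (Finset.mem_range.2 (by omega : 2*m < 2*m+1))
    rw [hck]
    calc (m.factorial : ℝ) = W a (2*m) 0 (2*m) * W a (2*m) (2*m) 0 := by
          rw [htop, W_down]; ring
      _ ≤ _ := hsingle
  have hck2 : W a (2*(n+1)) 0 0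
      = ∑ k ∈ Finset.range (4*m+1), W a (4*m) 0 k * W a (2*(n+1-2*m)) k 0 := by
    rw [show 2*(n+1) = (4*m)+(2*(n+1-2*m)) from by omega]
    exact CK a (4*m) (2*(n+1-2*m)) 0 0 (4*m+1) (by omega)
  have hsingle2 := Finset.single_le_sum
      (f := fun k => W a (4*m) 0 k * W a (2*(n+1-2*m)) k 0)
      (fun k _ => mul_nonneg (W_nonneg a _ _ _) (W_nonneg a _ _ _))
      (Finset.mem_range.2 (by omega : 0 < 4*m+1))
  rw [hck2]
  calc (m.factorial : ℝ) * W a (2*(n+1-2*m)) 0 0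
      ≤ W a (4*m) 0 0 * W a (2*(n+1-2*m)) 0 0 :=
        mul_le_mul_of_nonneg_right step1 (W_nonneg a _ _ _)
    _ ≤ _ := hsingle2

end Hyp

end MPartAux


open MPartAux in
/-- For `a(2l) = l`, `a(2l+1) = 1` (the partition algebra case), the sequence `(a l)` is
unbounded, hence `M(2n,0)/M(2n+2,0) → 0`, where `M(n,l)` is defined by `M(n,n)=1`,
`M(2n+2,0)=M(2n+1,1)`, `M(n,l)=M(n-1,l-1)+a_{l+1}·M(n-1,l+1)`. -/
theorem M_partition_ratio_tendsto_zero (a : ℕ → ℕ)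
    (haeven : ∀ l, 1 ≤ l → a (2 * l) = l)
    (haodd : ∀ l, a (2 * l + 1) = 1)
    (M : ℕ → ℕ → ℝ)
    (hMdiag : ∀ n, M n n = 1)
    (hM0 : ∀ n, M (2 * n + 2) 0 = M (2 * n + 1) 1)
    (hMrec : ∀ n l, 0 < l → l < n →
      M n l = M (n - 1) (l - 1) + (a (l + 1) : ℝ) * M (n - 1) (l + 1)) :
    (∀ N : ℕ, ∃ l, 1 ≤ l ∧ N < a l) ∧
      Tendsto (fun n => M (2 * n) 0 / M (2 * n + 2) 0) atTop (nhds 0) := by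
  constructor
  · intro N
    refine ⟨2*(N+1), by omega, ?_⟩
    rw [haeven (N+1) (by omega)]
    omega
  -- M agrees with the weighted path count W
  have M_eq : ∀ n l, l ≤ n → Even (n - l) → M n l = W a n l 0 := by
    intro n
    induction n using Nat.strong_induction_on with
    | _ n ih =>
      intro l hl he
      rcases Nat.eq_or_lt_of_le hl with heq | hlt
      · subst heq
        rw [hMdiag, W_down]
      · by_cases hl0 : l = 0
        · subst hl0
          obtain ⟨t, ht⟩ := he
          obtain ⟨k, hk⟩ : ∃ k, n = 2*k+2 := ⟨t-1, by omega⟩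
          subst hk
          rw [hM0 k]
          have heven1 : Even (2*k+1 - 1) := ⟨k, by omega⟩
          have h1 : M (2*k+1) 1 = W a (2*k+1) 1 0 :=
            ih (2*k+1) (by omega) 1 (by omega) heven1
          have ha1 : a 1 = 1 := by simpa using haodd 0
          have hw : W a ((2*k+1)+1) 0 0 = W a (2*k+1) 1 0 := by
            rw [W_succ, if_pos rfl]
            norm_num [ha1]
          rw [h1, show (2*k+2) = (2*k+1)+1 from by ring, hw]
        · obtain ⟨t, ht⟩ := he
          rw [hMrec n l (by omega) hlt]
          have e1 : M (n-1) (l-1) = W a (n-1) (l-1) 0 :=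
            ih (n-1) (by omega) (l-1) (by omega) ⟨t, by omega⟩
          have hln : l + 1 ≤ n - 1 := by omega
          have e2 : M (n-1) (l+1) = W a (n-1) (l+1) 0 :=
            ih (n-1) (by omega) (l+1) hln ⟨t-1, by omega⟩
          rw [e1, e2]
          have hw := W_succ a (n-1) l 0
          rw [show n-1+1 = n from by omega] at hw
          rw [hw, if_neg hl0]
  -- the sequence F n = M(2n, 0)
  set F : ℕ → ℝ := fun n => W a (2*n) 0 0 with hF
  have hFone : ∀ n, 1 ≤ F n := fun n => f_ge_one a haodd n
  have hFpos : ∀ n, 0 < F n := fun n => lt_of_lt_of_le one_pos (hFone n)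
  have hFmono : ∀ n, F n ≤ F (n+1) := fun n => f_mono a haodd n
  set r : ℕ → ℝ := fun n => F (n+1) / F n with hr
  have hrpos : ∀ n, 0 < r n := fun n => div_pos (hFpos _) (hFpos _)
  have hFr : ∀ n, F (n+1) = r n * F n := fun n => by
    have h0 : F n ≠ 0 := (hFpos n).ne'
    rw [hr]
    field_simp
  have hrmono : Monotone r := by
    apply monotone_nat_of_le_succ
    intro n
    have hlc := logconv a (n+1) (by omega)
    simp only [show n+1-1 = n from by omega] at hlc
    rw [div_le_div_iff₀ (hFpos n) (hFpos (n+1))]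
    calc F (n+1) * F (n+1) = F (n+1)^2 := by ring
      _ ≤ F (n+1+1) * F n := hlc
      _ = F (n+2) * F n := by norm_num
  have bound : ∀ n j, j ≤ n+1 → F (n+1) ≤ F (n+1-j) * r n ^ j := by
    intro n j
    induction j with
    | zero => intro _; simp
    | succ j ihj =>
      intro hj
      have h1 : F (n+1) ≤ F (n+1-j) * r n ^ j := ihj (by omega)
      have hnj : n+1-j = (n-j)+1 := by omega
      have h2 : F (n+1-j) ≤ r n * F (n-j) := by
        rw [hnj, hFr (n-j)]
        exact mul_le_mul_of_nonneg_right (hrmono (by omega : n-j ≤ n)) (le_of_lt (hFpos _))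
      calc F (n+1) ≤ F (n+1-j) * r n ^ j := h1
        _ ≤ (r n * F (n-j)) * r n ^ j :=
            mul_le_mul_of_nonneg_right h2 (pow_nonneg (le_of_lt (hrpos n)) j)
        _ = F (n+1-(j+1)) * r n ^ (j+1) := by
            rw [show n+1-(j+1) = n-j from by omega]
            ring
  have key : ∀ m n, 2*m ≤ n+1 → (m.factorial : ℝ) ≤ r n ^ (2*m) := by
    intro m n hm
    have h1 := lowbd a haeven haodd m n hm
    have h2 := bound n (2*m) (by omega)
    have h3 : (m.factorial : ℝ) * F (n+1-2*m) ≤ r n ^ (2*m) * F (n+1-2*m) := by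
      calc (m.factorial : ℝ) * F (n+1-2*m) ≤ F (n+1) := h1
        _ ≤ F (n+1-2*m) * r n ^ (2*m) := h2
        _ = r n ^ (2*m) * F (n+1-2*m) := by ring
    exact le_of_mul_le_mul_right h3 (hFpos _)
  -- rewrite the statement in terms of F
  have hfun : (fun n => M (2 * n) 0 / M (2 * n + 2) 0) = fun n => F n / F (n+1) := by
    funext n
    have e1 : M (2*n) 0 = F n := M_eq (2*n) 0 (by omega) ⟨n, by omega⟩
    have e2 : M (2*n+2) 0 = F (n+1) := by
      rw [show 2*n+2 = 2*(n+1) from by ring]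
      exact M_eq (2*(n+1)) 0 (by omega) ⟨n+1, by omega⟩
    rw [e1, e2]
  rw [hfun]
  rw [Metric.tendsto_atTop]
  intro ε hε
  obtain ⟨K, hK⟩ := exists_nat_gt (1/ε)
  obtain ⟨m, hm1, hm2⟩ := ((Nat.eventually_pow_lt_factorial_sub (K^2) 0).and
      (eventually_ge_atTop 1)).exists
  refine ⟨2*m, fun n hn => ?_⟩
  have hrn : (K : ℝ) < r n := by
    have hpow : ((K:ℝ))^(2*m) < r n ^ (2*m) := by
      have hkey := key m n (by omega)
      have hnat : ((K^2)^m : ℕ) < m.factorial := by simpa using hm1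
      calc ((K:ℝ))^(2*m) = (((K^2)^m : ℕ) : ℝ) := by push_cast; rw [pow_mul]
        _ < (m.factorial : ℝ) := by exact_mod_cast hnat
        _ ≤ r n ^ (2*m) := hkey
    exact lt_of_pow_lt_pow_left₀ (2*m) (le_of_lt (hrpos n)) hpow
  have hKε : 1/ε < r n := lt_of_lt_of_le hK (le_of_lt hrn)
  have hrε : 1 / r n < ε := by
    rw [div_lt_iff₀ (hrpos n)]
    rw [div_lt_iff₀ hε] at hKε
    linarith [mul_comm ε (r n)]
  have hdiv : F n / F (n+1) = 1 / r n := by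
    rw [hr, one_div_div]
  rw [Real.dist_eq, sub_zero, abs_of_nonneg (le_of_lt (div_pos (hFpos n) (hFpos (n+1)))),
    hdiv]
  exact hrε
end

section
/- For the sequence a_l = ⌊(l+1)/2⌋ (the walled Brauer algebra case), a_l is unbounded, and hence the quantities M(2n,0) defined by the recursion M(n,n)=1, M(2n+2,0)=M(2n+1,1), M(n,l)=M(n-1,l-1)+a_{l+1}·M(n-1,l+1) grow faster than any geometric sequence: for every M > 0 there exists C > 0 with M(2n,0) > C·M^n for all n. -/
/-- For `a l = ⌊(l+1)/2⌋` (the walled Brauer algebra case), the sequence `(a l)` is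
unbounded, and hence the quantities `M(2n,0)` defined by `M(n,n)=1`,
`M(2n+2,0)=M(2n+1,1)`, `M(n,l)=M(n-1,l-1)+a_{l+1}·M(n-1,l+1)` grow faster than any
geometric sequence: for every `M > 0` there is `C > 0` with `M(2n,0) > C·M^n`. -/
theorem M_walledBrauer_supergeom (a : ℕ → ℕ) (hadef : ∀ l, 1 ≤ l → a l = (l + 1) / 2)
    (M : ℕ → ℕ → ℝ)
    (hMdiag : ∀ n, M n n = 1)
    (hM0 : ∀ n, M (2 * n + 2) 0 = M (2 * n + 1) 1)
    (hMrec : ∀ n l, 0 < l → l < n →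
      M n l = M (n - 1) (l - 1) + (a (l + 1) : ℝ) * M (n - 1) (l + 1)) :
    (∀ N : ℕ, ∃ l, 1 ≤ l ∧ N < a l) ∧
      ∀ Mc : ℝ, 0 < Mc → ∃ C : ℝ, 0 < C ∧ ∀ n, C * Mc ^ n < M (2 * n) 0 := by
  -- positivity of all admissible M values
  have hpos : ∀ n l m, n = l + 2 * m → 0 < M n l := by
    intro n
    induction n using Nat.strong_induction_on with
    | _ n ih =>
      intro l m hnm
      rcases eq_or_lt_of_le (show l ≤ n by omega) with h | h
      · rw [← h, hMdiag]; exact one_pos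
      · rcases Nat.eq_zero_or_pos l with hl | hl
        · -- l = 0, n = 2m, m ≥ 1
          subst hl
          have hm : 1 ≤ m := by omega
          have hn : n = 2 * (m - 1) + 2 := by omega
          rw [hn, hM0 (m - 1)]
          exact ih (2 * (m - 1) + 1) (by omega) 1 (m - 1) (by omega)
        · rw [hMrec n l hl h]
          have h1 : 0 < M (n - 1) (l - 1) := ih (n - 1) (by omega) (l - 1) m (by omega)
          have h2 : 0 < M (n - 1) (l + 1) := ih (n - 1) (by omega) (l + 1) (m - 1) (by omega)
          have : (0 : ℝ) ≤ (a (l + 1) : ℝ) := Nat.cast_nonneg _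
          nlinarith
  -- chain lower bound
  have hchain : ∀ d k, 1 ≤ k →
      (∏ j ∈ Finset.Icc (k + 1) (k + d), (a j : ℝ)) ≤ M (k + 2 * d) k := by
    intro d
    induction d with
    | zero =>
      intro k hk
      have h1 : Finset.Icc (k + 1) (k + 0) = ∅ := by
        rw [Finset.Icc_eq_empty_iff]; omega
      rw [h1, Finset.prod_empty]
      have h2 : k + 2 * 0 = k := by omega
      rw [h2, hMdiag]
    | succ d ihd =>
      intro k hk
      have hrec := hMrec (k + 2 * (d + 1)) k hk (by omega)
      have he : k + 2 * (d + 1) - 1 = (k + 1) + 2 * d := by omega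
      rw [he] at hrec
      have hIH := ihd (k + 1) (by omega)
      have hprod : (∏ j ∈ Finset.Icc (k + 1) (k + (d + 1)), (a j : ℝ))
          = (a (k + 1) : ℝ) * ∏ j ∈ Finset.Icc (k + 2) (k + 1 + d), (a j : ℝ) := by
        have hins : Finset.Icc (k + 1) (k + (d + 1))
            = insert (k + 1) (Finset.Icc (k + 2) (k + 1 + d)) := by
          ext x
          simp only [Finset.mem_Icc, Finset.mem_insert]
          omega
        rw [hins, Finset.prod_insert (by simp only [Finset.mem_Icc]; omega)]
      have eidx : (k + 1) + 2 * d = (k - 1) + 2 * (d + 1) := by omega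
      have hp1 : 0 < M ((k + 1) + 2 * d) (k - 1) := by
        rw [eidx]; exact hpos _ _ (d + 1) rfl
      have ha0 : (0 : ℝ) ≤ (a (k + 1) : ℝ) := Nat.cast_nonneg _
      have hIcc : Finset.Icc (k + 1 + 1) (k + 1 + d) = Finset.Icc (k + 2) (k + 1 + d) := by
        congr 1
      rw [hIcc] at hIH
      rw [hprod, hrec]
      have := mul_le_mul_of_nonneg_left hIH ha0
      nlinarith
  -- factorial lower bound for the product
  have hfact : ∀ n : ℕ, ((n / 2).factorial : ℝ) ≤ ∏ j ∈ Finset.Icc 2 n, (a j : ℝ) := by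
    intro n
    have key : ((n / 2).factorial : ℕ) ≤ ∏ j ∈ Finset.Icc 2 n, a j := by
      have h1 : (n / 2).factorial = ∏ i ∈ Finset.Icc 1 (n / 2), i := by
        rw [← Finset.Ico_add_one_right_eq_Icc, Finset.prod_Ico_id_eq_factorial]
      have h2 : ∀ i ∈ Finset.Icc 1 (n / 2), i = a (2 * i) := by
        intro i hi
        simp only [Finset.mem_Icc] at hi
        rw [hadef (2 * i) (by omega)]
        omega
      have h3 : (∏ x ∈ Finset.Icc 1 (n / 2), a (2 * x))
          = ∏ j ∈ (Finset.Icc 1 (n / 2)).image (fun i => 2 * i), a j :=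
        (Finset.prod_image (by intro x _ y _ h; omega)).symm
      rw [h1, Finset.prod_congr rfl h2, h3]
      refine Finset.prod_le_prod_of_subset_of_one_le' ?_ ?_
      · intro j hj
        simp only [Finset.mem_image, Finset.mem_Icc] at hj ⊢
        obtain ⟨i, hi, rfl⟩ := hj
        omega
      · intro j hj _
        simp only [Finset.mem_Icc] at hj
        rw [hadef j (by omega)]
        omega
    calc ((n / 2).factorial : ℝ) ≤ ((∏ j ∈ Finset.Icc 2 n, a j : ℕ) : ℝ) := by
          exact_mod_cast key
      _ = ∏ j ∈ Finset.Icc 2 n, (a j : ℝ) := by push_cast; ring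
  -- main lower bound
  have hMlow : ∀ n : ℕ, 1 ≤ n → ((n / 2).factorial : ℝ) ≤ M (2 * n) 0 := by
    intro n hn
    have h0 := hM0 (n - 1)
    have e1 : 2 * (n - 1) + 2 = 2 * n := by omega
    have e2 : 2 * (n - 1) + 1 = 1 + 2 * (n - 1) := by omega
    rw [e1, e2] at h0
    have hc := hchain (n - 1) 1 le_rfl
    have e3 : Finset.Icc (1 + 1) (1 + (n - 1)) = Finset.Icc 2 n := by
      congr 1 <;> omega
    rw [e3] at hc
    calc ((n / 2).factorial : ℝ) ≤ ∏ j ∈ Finset.Icc 2 n, (a j : ℝ) := hfact n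
      _ ≤ M (1 + 2 * (n - 1)) 1 := hc
      _ = M (2 * n) 0 := h0.symm
  constructor
  · intro N
    exact ⟨2 * N + 2, by omega, by rw [hadef _ (by omega)]; omega⟩
  · intro Mc hMc
    have hB1 : (1 : ℝ) ≤ max Mc 1 := le_max_right _ _
    have hB0 : (0 : ℝ) < max Mc 1 := lt_of_lt_of_le one_pos hB1
    have htend := FloorSemiring.tendsto_pow_div_factorial_atTop (K := ℝ) ((max Mc 1) ^ 2)
    obtain ⟨K, hK⟩ := (htend.eventually_lt_const
      (show (0:ℝ) < 1 / max Mc 1 by positivity)).exists_forall_of_atTop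
    have hne : (Finset.range (2 * K + 1)).Nonempty := ⟨0, Finset.mem_range.mpr (by omega)⟩
    set C : ℝ := (1 / 2) * Finset.inf' (Finset.range (2 * K + 1)) hne
        (fun n => min 1 (M (2 * n) 0 / Mc ^ n)) with hC
    have hMpos : ∀ n : ℕ, 0 < M (2 * n) 0 := fun n => hpos (2 * n) 0 n (by omega)
    have hinfle : ∀ n ∈ Finset.range (2 * K + 1),
        Finset.inf' (Finset.range (2 * K + 1)) hne (fun n => min 1 (M (2 * n) 0 / Mc ^ n))
          ≤ min 1 (M (2 * n) 0 / Mc ^ n) := fun n hn => Finset.inf'_le _ hn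
    have hCpos : 0 < C := by
      rw [hC]
      have h : 0 < Finset.inf' (Finset.range (2 * K + 1)) hne
          (fun n => min 1 (M (2 * n) 0 / Mc ^ n)) := by
        rw [Finset.lt_inf'_iff]
        intro i _
        exact lt_min one_pos (div_pos (hMpos i) (pow_pos hMc i))
      linarith
    have hChalf : C ≤ 1 / 2 := by
      have h := hinfle 0 (Finset.mem_range.mpr (by omega))
      have h2 : min 1 (M (2 * 0) 0 / Mc ^ 0) ≤ 1 := min_le_left _ _
      rw [hC]
      nlinarith
    refine ⟨C, hCpos, fun n => ?_⟩
    rcases lt_or_ge n (2 * K + 1) with hn | hn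
    · have h := hinfle n (Finset.mem_range.mpr hn)
      have hmr : min 1 (M (2 * n) 0 / Mc ^ n) ≤ M (2 * n) 0 / Mc ^ n := min_le_right _ _
      have h2 : C ≤ (1 / 2) * (M (2 * n) 0 / Mc ^ n) := by
        rw [hC]; nlinarith
      have hp : 0 < Mc ^ n := pow_pos hMc n
      have hdp : 0 < M (2 * n) 0 / Mc ^ n := div_pos (hMpos n) hp
      have h3 : C < M (2 * n) 0 / Mc ^ n := by nlinarith
      calc C * Mc ^ n < (M (2 * n) 0 / Mc ^ n) * Mc ^ n := mul_lt_mul_of_pos_right h3 hp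
        _ = M (2 * n) 0 := by field_simp
    · have hn1 : 1 ≤ n := by omega
      have hKn := hK (n / 2) (by omega)
      have hfacp : (0 : ℝ) < ((n / 2).factorial : ℝ) := by
        exact_mod_cast (n / 2).factorial_pos
      have hBpow : (max Mc 1) * ((max Mc 1) ^ 2) ^ (n / 2) < ((n / 2).factorial : ℝ) := by
        rw [div_lt_div_iff₀ hfacp hB0] at hKn
        nlinarith [pow_nonneg (le_of_lt hB0) (2 * (n / 2))]
      have hMcB : Mc ^ n ≤ (max Mc 1) * ((max Mc 1) ^ 2) ^ (n / 2) := by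
        have h1 : Mc ^ n ≤ (max Mc 1) ^ n := pow_le_pow_left₀ (le_of_lt hMc) (le_max_left _ _) n
        have h2 : (max Mc 1) ^ n ≤ (max Mc 1) ^ (2 * (n / 2) + 1) :=
          pow_le_pow_right₀ hB1 (by omega)
        calc Mc ^ n ≤ (max Mc 1) ^ n := h1
          _ ≤ (max Mc 1) ^ (2 * (n / 2) + 1) := h2
          _ = (max Mc 1) * ((max Mc 1) ^ 2) ^ (n / 2) := by
              rw [pow_succ, ← pow_mul]; ring
      have hlt : Mc ^ n < M (2 * n) 0 :=
        lt_of_le_of_lt hMcB (lt_of_lt_of_le hBpow (hMlow n hn1))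
      have hp : 0 < Mc ^ n := pow_pos hMc n
      nlinarith
end
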